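/- arXiv:2510.08652 — 8 statements merged into one kernel-verified Lean document; each statement's English description precedes it below -/
import Mathlib

section
/- For real x with 0 < x < 1, the series Σ_{n=1}^∞ n·xⁿ converges, and the limit as x → 1⁻ of (Σ_{n=1}^∞ n·xⁿ − 1/(log x)²) equals −1/12. -/
/-!
Since `∑ n xⁿ = x / (1 - x)²`, the substitution `x = eᵗ` turns the claim into
`eᵗ / (eᵗ - 1)² - 1 / t² → -1/12` as `t → 0`. Writing
`eᵗ = 1 + t + t²/2 + t³/6 + t³ τ(t)` with `τ(t) → 0`, the difference becomes an explicit rational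
function of `t` and `τ(t)` that is continuous at `(0, 0)` with value `-1/12`.
-/

open Filter Topology

theorem hasSum_succ_mul_pow_succ {𝕜 : Type*} [NormedDivisionRing 𝕜] {x : 𝕜} (hx : ‖x‖ < 1) :
    HasSum (fun n : ℕ => ((n + 1 : ℕ) : 𝕜) * x ^ (n + 1)) (x / (1 - x) ^ 2) := by
  simpa using (hasSum_nat_add_iff' (f := fun n : ℕ => (n : 𝕜) * x ^ n) 1).mpr
    (hasSum_coe_mul_geometric_of_norm_lt_one hx)

theorem div_sub_one_sq_sub_inv_sq_eq {K : Type*} [Field K] [CharZero K] {t e τ : K}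
    (he : e ≠ 1) (hτ : e = 1 + t + t ^ 2 / 2 + t ^ 3 / 6 + t ^ 3 * τ) :
    e / (e - 1) ^ 2 - 1 / t ^ 2 =
      (-1 / 12 - 2 * τ - t ^ 2 / 36 - τ * t ^ 2 / 3 - τ ^ 2 * t ^ 2) /
        (1 + t / 2 + t ^ 2 / 6 + t ^ 2 * τ) ^ 2 := by
  set u := 1 + t / 2 + t ^ 2 / 6 + t ^ 2 * τ
  have hu : e - 1 = t * u := by rw [hτ]; ring
  obtain ⟨ht, hu0⟩ : t ≠ 0 ∧ u ≠ 0 :=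
    mul_ne_zero_iff.mp fun h => he (sub_eq_zero.mp (hu.trans h))
  rw [hu, eq_div_iff (pow_ne_zero 2 hu0)]
  field_simp
  rw [hτ]
  ring

namespace Real

theorem tendsto_exp_sub_taylor_div_pow_three :
    Tendsto (fun t => (exp t - (1 + t + t ^ 2 / 2 + t ^ 3 / 6)) / t ^ 3) (𝓝 0) (𝓝 0) := by
  simpa [Finset.sum_range_succ, Nat.factorial] using
    (exp_sub_sum_range_succ_isLittleO_pow 3).tendsto_div_nhds_zero

theorem tendsto_exp_div_exp_sub_one_sq_sub_inv_sq :
    Tendsto (fun t => exp t / (exp t - 1) ^ 2 - 1 / t ^ 2) (𝓝[≠] 0) (𝓝 (-1 / 12)) := by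
  set τ := fun t : ℝ => (exp t - (1 + t + t ^ 2 / 2 + t ^ 3 / 6)) / t ^ 3
  have hτ : Tendsto τ (𝓝[≠] 0) (𝓝 0) :=
    tendsto_exp_sub_taylor_div_pow_three.mono_left nhdsWithin_le_nhds
  have hG : ContinuousAt (fun p : ℝ × ℝ =>
      (-1 / 12 - 2 * p.2 - p.1 ^ 2 / 36 - p.2 * p.1 ^ 2 / 3 - p.2 ^ 2 * p.1 ^ 2) /
        (1 + p.1 / 2 + p.1 ^ 2 / 6 + p.1 ^ 2 * p.2) ^ 2) (0, 0) := by
    fun_prop (disch := norm_num)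
  have hlim := hG.tendsto.comp ((tendsto_nhdsWithin_of_tendsto_nhds tendsto_id).prodMk_nhds hτ)
  refine (hlim.congr' ?_).mono_right (le_of_eq (by norm_num))
  filter_upwards [self_mem_nhdsWithin] with t (ht : t ≠ 0)
  refine (div_sub_one_sq_sub_inv_sq_eq (exp_eq_one_iff t |>.not.mpr ht) ?_).symm
  simp only [τ, id]
  field_simp
  ring

theorem tendsto_log_nhdsNE_one : Tendsto log (𝓝[≠] 1) (𝓝[≠] 0) := by
  refine tendsto_nhdsWithin_iff.mpr ⟨?_, ?_⟩
  · simpa using (continuousAt_log one_ne_zero).tendsto.mono_left nhdsWithin_le_nhds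
  · filter_upwards [self_mem_nhdsWithin, nhdsWithin_le_nhds (lt_mem_nhds one_pos)] with x hx hx0
    exact log_ne_zero_of_pos_of_ne_one hx0 hx

end Real

theorem ramanujan_sum_of_naturals :
    (∀ x : ℝ, 0 < x → x < 1 → Summable (fun n : ℕ => ((n + 1 : ℕ) : ℝ) * x ^ (n + 1))) ∧
    Tendsto (fun x : ℝ =>
        (∑' n : ℕ, ((n + 1 : ℕ) : ℝ) * x ^ (n + 1)) - 1 / (Real.log x) ^ 2)
      (𝓝[Set.Ioo (0 : ℝ) 1] 1) (𝓝 (-1 / 12)) := by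
  have hasSum {x : ℝ} (hx : x ∈ Set.Ioo 0 1) := hasSum_succ_mul_pow_succ (x := x)
    (by rw [Real.norm_eq_abs, abs_of_pos hx.1]; exact hx.2)
  refine ⟨fun x hx0 hx1 => (hasSum ⟨hx0, hx1⟩).summable, ?_⟩
  have hlog : Tendsto Real.log (𝓝[Set.Ioo 0 1] 1) (𝓝[≠] 0) :=
    Real.tendsto_log_nhdsNE_one.mono_left (nhdsWithin_mono _ fun x hx => hx.2.ne)
  refine (Real.tendsto_exp_div_exp_sub_one_sq_sub_inv_sq.comp hlog).congr' ?_
  filter_upwards [self_mem_nhdsWithin] with x hx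
  rw [Function.comp_apply, Real.exp_log hx.1, (hasSum hx).tsum_eq, sub_sq_comm]
end

section
/- For real x with 0 < x < 1, the series Σ_{n=1}^∞ n³·xⁿ converges, and the limit as x → 1⁻ of (Σ_{n=1}^∞ n³·xⁿ − 6/(−log x)⁴) equals 1/120. -/
/-!
Summing `(n + 1)³ xⁿ⁺¹` from binomial series gives `x (x² + 4x + 1) / (1 - x)⁴`. With `x = e^{-t}`
the quantity in question becomes `N(t) / t⁸ · (t / (eᵗ - 1))⁴`, where
`N(t) = t⁴ (e^{3t} + 4 e^{2t} + eᵗ) - 6 (eᵗ - 1)⁴`. Expanding every exponential shows that the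
Taylor series of `N` starts with `t⁸ / 120`, and an entire power series whose first `m`
coefficients vanish, divided by `tᵐ`, tends to its `m`-th coefficient.
-/

open Filter Topology Real
open scoped Nat

theorem tendsto_div_pow_of_hasSum {a : ℕ → ℝ} {f : ℝ → ℝ} {m : ℕ}
    (hf : ∀ t, HasSum (fun k ↦ a k * t ^ k) (f t)) (ha : ∀ k < m, a k = 0) :
    Tendsto (fun t ↦ f t / t ^ m) (𝓝[≠] 0) (𝓝 (a m)) := by
  have hshift : ∀ t ≠ 0, HasSum (fun k ↦ a (k + m) * t ^ k) (f t / t ^ m) := by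
    intro t ht
    have h := (hasSum_nat_add_iff' m).2 (hf t)
    rw [Finset.sum_eq_zero fun k hk ↦ by rw [ha k (Finset.mem_range.1 hk), zero_mul],
      sub_zero] at h
    refine (h.div_const (t ^ m)).congr_fun fun k ↦ ?_
    rw [pow_add, ← mul_assoc, mul_div_cancel_right₀ _ (pow_ne_zero m ht)]
  have habs : Summable fun k ↦ |a (k + m)| := by
    have h := (hf 1).summable.abs
    simp only [one_pow, mul_one] at h
    exact (summable_nat_add_iff m).2 h
  have hcont : ContinuousOn (fun t ↦ ∑' k, a (k + m) * t ^ k) (Set.Icc (-1) 1) := by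
    refine continuousOn_tsum (fun k ↦ by fun_prop) habs fun k t ht ↦ ?_
    rw [norm_mul, norm_pow, Real.norm_eq_abs, Real.norm_eq_abs]
    exact mul_le_of_le_one_right (abs_nonneg _) (pow_le_one₀ (abs_nonneg t) (abs_le.2 ht))
  have hzero : ∑' k, a (k + m) * (0 : ℝ) ^ k = a m := by
    rw [tsum_eq_single 0 fun k hk ↦ by rw [zero_pow hk, mul_zero]]
    simp
  have h := hcont.continuousAt (x := 0) (Icc_mem_nhds (by norm_num) (by norm_num))
  rw [ContinuousAt, hzero] at h
  refine (h.mono_left nhdsWithin_le_nhds).congr' ?_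
  filter_upwards [self_mem_nhdsWithin] with t ht
  exact (hshift t ht).tsum_eq

theorem hasSum_exp_mul (c t : ℝ) : HasSum (fun k ↦ c ^ k / k ! * t ^ k) (exp (c * t)) := by
  rw [exp_eq_exp_ℝ]
  exact (NormedSpace.expSeries_div_hasSum_exp (c * t)).congr_fun fun k ↦ by ring

theorem hasSum_pow_mul_exp_mul (m : ℕ) (c t : ℝ) :
    HasSum (fun k ↦ (if m ≤ k then c ^ (k - m) / (k - m)! else 0) * t ^ k)
      (t ^ m * exp (c * t)) := by
  refine (hasSum_nat_add_iff' m).1 ?_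
  rw [Finset.sum_eq_zero fun k hk ↦ by simp [Finset.mem_range.1 hk], sub_zero]
  refine ((hasSum_exp_mul c t).mul_left (t ^ m)).congr_fun fun k ↦ ?_
  simp only [le_add_iff_nonneg_left, zero_le, if_true, Nat.add_sub_cancel]
  ring

/-- The summand `0 ^ k` is the coefficient of `e^{0 t} = 1`. -/
noncomputable def ramanujanCoeff (k : ℕ) : ℝ :=
  (if 4 ≤ k then ((3 : ℝ) ^ (k - 4) + 4 * 2 ^ (k - 4) + 1) / (k - 4)! else 0)
    - 6 * ((4 : ℝ) ^ k - 4 * 3 ^ k + 6 * 2 ^ k - 4 + 0 ^ k) / k !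

theorem hasSum_ramanujanCoeff_mul_pow (t : ℝ) :
    HasSum (fun k ↦ ramanujanCoeff k * t ^ k)
      (t ^ 4 * (exp t ^ 3 + 4 * exp t ^ 2 + exp t) - 6 * (exp t - 1) ^ 4) := by
  have hpow (n : ℕ) : exp (n * t) = exp t ^ n := exp_nat_mul t n
  have hexpand : t ^ 4 * (exp t ^ 3 + 4 * exp t ^ 2 + exp t) - 6 * (exp t - 1) ^ 4 =
      t ^ 4 * exp (3 * t) + 4 * (t ^ 4 * exp (2 * t)) + t ^ 4 * exp (1 * t) -
        6 * (exp (4 * t) - 4 * exp (3 * t) + 6 * exp (2 * t) - 4 * exp (1 * t) + exp (0 * t)) := by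
    have h2 : exp (2 * t) = exp t ^ 2 := by exact_mod_cast hpow 2
    have h3 : exp (3 * t) = exp t ^ 3 := by exact_mod_cast hpow 3
    have h4 : exp (4 * t) = exp t ^ 4 := by exact_mod_cast hpow 4
    rw [h2, h3, h4, one_mul, zero_mul, exp_zero]
    ring
  rw [hexpand]
  refine ((((hasSum_pow_mul_exp_mul 4 3 t).add ((hasSum_pow_mul_exp_mul 4 2 t).mul_left 4)).add
    (hasSum_pow_mul_exp_mul 4 1 t)).sub
    ((((((hasSum_exp_mul 4 t).sub ((hasSum_exp_mul 3 t).mul_left 4)).add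
      ((hasSum_exp_mul 2 t).mul_left 6)).sub ((hasSum_exp_mul 1 t).mul_left 4)).add
      (hasSum_exp_mul 0 t)).mul_left 6)).congr_fun fun k ↦ ?_
  simp only [ramanujanCoeff]
  split_ifs <;> ring

theorem ramanujanCoeff_eq_zero_of_lt {k : ℕ} (hk : k < 8) : ramanujanCoeff k = 0 := by
  interval_cases k <;> norm_num [ramanujanCoeff, Nat.factorial]

theorem ramanujanCoeff_eight : ramanujanCoeff 8 = 1 / 120 := by
  norm_num [ramanujanCoeff, Nat.factorial]

theorem tendsto_exp_sub_one_div : Tendsto (fun t ↦ (exp t - 1) / t) (𝓝[≠] 0) (𝓝 1) := by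
  simpa [div_eq_inv_mul] using (hasDerivAt_exp 0).tendsto_slope_zero

theorem tendsto_sum_cubes_exp_neg_sub_six_div :
    Tendsto (fun t ↦ exp (-t) * (exp (-t) ^ 2 + 4 * exp (-t) + 1) / (1 - exp (-t)) ^ 4 - 6 / t ^ 4)
      (𝓝[≠] 0) (𝓝 (1 / 120)) := by
  have hnum := tendsto_div_pow_of_hasSum hasSum_ramanujanCoeff_mul_pow
    fun _ ↦ ramanujanCoeff_eq_zero_of_lt
  rw [ramanujanCoeff_eight] at hnum
  have h := hnum.div (tendsto_exp_sub_one_div.pow 4) (by norm_num)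
  rw [one_pow, div_one] at h
  refine h.congr' ?_
  filter_upwards [self_mem_nhdsWithin] with t (ht : t ≠ 0)
  have hexp : exp t - 1 ≠ 0 := sub_ne_zero.2 (exp_eq_one_iff t |>.not.2 ht)
  rw [Pi.div_apply, exp_neg]
  field_simp
  ring

theorem add_one_pow_three_add_choose (n : ℕ) :
    (n + 1) ^ 3 + 6 * (n + 2).choose 2 = 6 * (n + 3).choose 3 + (n + 1).choose 1 := by
  have h3 : (n + 1) * ((n + 2) * (n + 3)) = 6 * (n + 3).choose 3 := by
    simpa [Nat.descFactorial_succ, Nat.factorial] using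
      Nat.descFactorial_eq_factorial_mul_choose (n + 3) 3
  have h2 : (n + 1) * (n + 2) = 2 * (n + 2).choose 2 := by
    simpa [Nat.descFactorial_succ, Nat.factorial] using
      Nat.descFactorial_eq_factorial_mul_choose (n + 2) 2
  rw [Nat.choose_one_right, ← h3, show 6 * (n + 2).choose 2 = 3 * (2 * (n + 2).choose 2) by ring,
    ← h2]
  ring

theorem hasSum_cube_mul_pow {𝕜 : Type*} [NormedField 𝕜] [HasSummableGeomSeries 𝕜] {x : 𝕜}
    (hx : ‖x‖ < 1) :
    HasSum (fun n : ℕ ↦ ((n + 1 : ℕ) : 𝕜) ^ 3 * x ^ (n + 1))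
      (x * (x ^ 2 + 4 * x + 1) / (1 - x) ^ 4) := by
  have hx1 : 1 - x ≠ 0 := sub_ne_zero.2 fun h ↦ by simp [← h] at hx
  rw [show x * (x ^ 2 + 4 * x + 1) / (1 - x) ^ 4 =
      x * (6 * (1 / (1 - x) ^ (3 + 1)) - 6 * (1 / (1 - x) ^ (2 + 1)) + 1 / (1 - x) ^ (1 + 1)) by
    field_simp; ring]
  refine ((((hasSum_choose_mul_geometric_of_norm_lt_one 3 hx).mul_left 6).sub
    ((hasSum_choose_mul_geometric_of_norm_lt_one 2 hx).mul_left 6)).add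
    (hasSum_choose_mul_geometric_of_norm_lt_one 1 hx)).mul_left x |>.congr_fun fun n ↦ ?_
  have hn := congrArg (Nat.cast : ℕ → 𝕜) (add_one_pow_three_add_choose n)
  push_cast at hn ⊢
  linear_combination x ^ (n + 1) * hn

theorem tendsto_neg_log_nhdsNE_zero :
    Tendsto (fun x ↦ -log x) (𝓝[Set.Ioo 0 1] 1) (𝓝[≠] 0) := by
  refine tendsto_nhdsWithin_of_tendsto_nhds_of_eventually_within _ ?_ ?_
  · simpa using ((continuousAt_log one_ne_zero).tendsto.neg).mono_left nhdsWithin_le_nhds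
  · filter_upwards [self_mem_nhdsWithin] with x ⟨hx0, hx1⟩
    exact neg_ne_zero.2 (log_neg hx0 hx1).ne

theorem ramanujan_sum_of_cubes :
    (∀ x : ℝ, 0 < x → x < 1 → Summable (fun n : ℕ => ((n + 1 : ℕ) : ℝ) ^ 3 * x ^ (n + 1))) ∧
    Tendsto (fun x : ℝ =>
        (∑' n : ℕ, ((n + 1 : ℕ) : ℝ) ^ 3 * x ^ (n + 1)) - 6 / (-Real.log x) ^ 4)
      (𝓝[Set.Ioo (0 : ℝ) 1] 1) (𝓝 (1 / 120)) := by
  have hsum (x : ℝ) (hx0 : 0 < x) (hx1 : x < 1) :=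
    hasSum_cube_mul_pow (by rwa [Real.norm_of_nonneg hx0.le] : ‖x‖ < 1)
  refine ⟨fun x hx0 hx1 ↦ (hsum x hx0 hx1).summable, ?_⟩
  refine (tendsto_sum_cubes_exp_neg_sub_six_div.comp tendsto_neg_log_nhdsNE_zero).congr' ?_
  filter_upwards [self_mem_nhdsWithin] with x ⟨hx0, hx1⟩
  rw [Function.comp_apply, neg_neg, exp_log hx0, (hsum x hx0 hx1).tsum_eq]
end

section
/- For every integer k ≥ 1, the limit as x → 1⁻ (x real, 0 < x < 1) of (Σ_{n=1}^∞ n^{k−1}·xⁿ − (k−1)!/(−log x)^k) equals (−1)^{k−1}·B_k/k, where B_k is the k-th Bernoulli number. -/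
/-!
Put `t = -log x`. Then `∑ n^(k-1) xⁿ = ∑ n^(k-1) e^(-nt)` is `(-1)^(k-1)` times the `(k-1)`-st
derivative of `1/(eᵗ - 1) = ∑ e^(-nt)`. The recursion for the Bernoulli numbers gives
`|B_m| ≤ m!`, so `t/(eᵗ - 1) = ∑ B_m tᵐ/m!` on `(-1, 1)` and
`φ(t) = 1/(eᵗ - 1) - 1/t = ∑ B_(m+1) tᵐ/(m+1)!` is analytic there. Differentiating
`1/(eᵗ - 1) = φ(t) + 1/t` exactly `k - 1` times, the pole contributes `±(k-1)!/t^k`, and what is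
left tends to `±φ^(k-1)(0) = ±B_k/k` as `t → 0⁺`.
-/

open Filter Topology Finset
open scoped Nat

theorem bernoulli_div_factorial_eq_neg_sum {n : ℕ} (hn : n ≠ 0) :
    (bernoulli n : ℝ) / n ! = -∑ k ∈ range n, (bernoulli k : ℝ) / k ! / (n + 1 - k)! := by
  have hsum : ∑ k ∈ range (n + 1), (bernoulli k : ℝ) / k ! / (n + 1 - k)! = 0 := by
    have h := congrArg (fun q : ℚ => (q : ℝ) / (n + 1)!) (sum_bernoulli (n + 1))
    simp only [if_neg (show n + 1 ≠ 1 by omega), Rat.cast_zero, zero_div, Rat.cast_sum,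
      Rat.cast_mul, Rat.cast_natCast, sum_div] at h
    rw [← h]
    refine sum_congr rfl fun k hk => ?_
    rw [Nat.cast_choose ℝ (mem_range.1 hk).le]
    field_simp
  rw [sum_range_succ, Nat.add_sub_cancel_left, Nat.factorial_one, Nat.cast_one, div_one] at hsum
  linarith

theorem abs_bernoulli_div_factorial_le_one (n : ℕ) : |(bernoulli n : ℝ) / n !| ≤ 1 := by
  induction n using Nat.strong_induction_on with
  | _ n ih =>
  rcases eq_or_ne n 0 with rfl | hn
  · simp
  rw [bernoulli_div_factorial_eq_neg_sum hn, abs_neg]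
  calc |∑ k ∈ range n, (bernoulli k : ℝ) / k ! / (n + 1 - k)!|
      ≤ ∑ k ∈ range n, (1 / 2 : ℝ) ^ (n - k) := by
        refine (abs_sum_le_sum_abs _ _).trans (sum_le_sum fun k hk => ?_)
        have hk : k < n := mem_range.1 hk
        have hfac : (2 : ℝ) ^ (n - k) ≤ (n + 1 - k)! := by
          have := @Nat.factorial_mul_pow_le_factorial 1 (n - k)
          rw [show 1 + (n - k) = n + 1 - k by omega] at this
          exact_mod_cast (by simpa using this)
        rw [abs_div, abs_of_pos (show (0 : ℝ) < (n + 1 - k)! by positivity), one_div_pow]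
        calc |(bernoulli k : ℝ) / k !| / (n + 1 - k)! ≤ 1 / (n + 1 - k)! := by
              gcongr; exact ih k hk
          _ ≤ 1 / 2 ^ (n - k) := by gcongr
    _ = ∑ i ∈ range n, (1 / 2 : ℝ) * (1 / 2) ^ i := by
        rw [← sum_range_reflect]
        refine sum_congr rfl fun i hi => ?_
        rw [show n - (n - 1 - i) = i + 1 by have := mem_range.1 hi; omega, pow_succ']
    _ ≤ 1 := by
        rw [← mul_sum]
        linarith [sum_geometric_two_le n]

theorem tsum_coeff_mul_pow_mul {R : Type*} [NormedCommRing R] [CompleteSpace R]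
    {f g : PowerSeries R} {t : R}
    (hf : Summable fun n => ‖PowerSeries.coeff n f * t ^ n‖)
    (hg : Summable fun n => ‖PowerSeries.coeff n g * t ^ n‖) :
    (∑' n, PowerSeries.coeff n f * t ^ n) * ∑' n, PowerSeries.coeff n g * t ^ n =
      ∑' n, PowerSeries.coeff n (f * g) * t ^ n := by
  rw [tsum_mul_tsum_eq_tsum_sum_antidiagonal_of_summable_norm hf hg]
  refine tsum_congr fun n => ?_
  rw [PowerSeries.coeff_mul, sum_mul]
  refine sum_congr rfl fun p hp => ?_
  rw [← mem_antidiagonal.1 hp, pow_add]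
  ring

theorem coeff_bernoulliPowerSeries_eq_div {A : Type*} [Field A] [CharZero A] (n : ℕ) :
    PowerSeries.coeff n (bernoulliPowerSeries A) = (bernoulli n : A) / n ! := by
  simp [bernoulliPowerSeries]

theorem summable_norm_bernoulli_div_factorial_mul_pow {t : ℝ} (ht : |t| < 1) :
    Summable fun n => ‖(bernoulli n : ℝ) / n ! * t ^ n‖ := by
  refine (summable_geometric_of_lt_one (abs_nonneg t) ht).of_nonneg_of_le
    (fun n => norm_nonneg _) fun n => ?_
  rw [norm_mul, norm_pow, Real.norm_eq_abs, Real.norm_eq_abs]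
  exact mul_le_of_le_one_left (by positivity) (abs_bernoulli_div_factorial_le_one n)

theorem tsum_bernoulli_div_factorial_mul_pow_mul_exp_sub_one {t : ℝ} (ht : |t| < 1) :
    (∑' n, (bernoulli n : ℝ) / n ! * t ^ n) * (Real.exp t - 1) = t := by
  have hβ := summable_norm_bernoulli_div_factorial_mul_pow ht
  have hexp_coeff (n : ℕ) : PowerSeries.coeff n (PowerSeries.exp ℝ) * t ^ n = t ^ n / n ! := by
    rw [PowerSeries.coeff_exp]
    simp [div_eq_inv_mul]
  have hexp : Summable fun n => ‖PowerSeries.coeff n (PowerSeries.exp ℝ) * t ^ n‖ :=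
    (Real.summable_pow_div_factorial |t|).congr fun n => by
      rw [hexp_coeff, norm_div, norm_pow, Real.norm_eq_abs, RCLike.norm_natCast]
  have hexp_eq : ∑' n, PowerSeries.coeff n (PowerSeries.exp ℝ) * t ^ n = Real.exp t := by
    rw [tsum_congr hexp_coeff, Real.exp_eq_exp_ℝ, NormedSpace.exp_eq_tsum_div]
  have hX : HasSum (fun n => PowerSeries.coeff n (PowerSeries.X : PowerSeries ℝ) * t ^ n) t := by
    convert hasSum_ite_eq 1 t using 2 with n
    rw [PowerSeries.coeff_X]
    split_ifs with h <;> simp [h]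
  have hmul : bernoulliPowerSeries ℝ * PowerSeries.exp ℝ =
      PowerSeries.X + bernoulliPowerSeries ℝ := by
    rw [← bernoulliPowerSeries_mul_exp_sub_one, mul_sub, mul_one, sub_add_cancel]
  have hβ' : Summable fun n => ‖PowerSeries.coeff n (bernoulliPowerSeries ℝ) * t ^ n‖ := by
    simpa only [coeff_bernoulliPowerSeries_eq_div] using hβ
  have key := tsum_coeff_mul_pow_mul hβ' hexp
  rw [hmul, hexp_eq] at key
  simp only [map_add, add_mul, coeff_bernoulliPowerSeries_eq_div] at key
  rw [(hX.add hβ.of_norm.hasSum).tsum_eq] at key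
  linear_combination key

noncomputable def bernoulliTail : FormalMultilinearSeries ℝ ℝ ℝ :=
  .ofScalars ℝ fun m => (bernoulli (m + 1) : ℝ) / (m + 1)!

theorem one_le_radius_bernoulliTail : 1 ≤ bernoulliTail.radius := by
  have h := bernoulliTail.le_radius_of_bound 1 (r := 1) fun n => by
    rw [bernoulliTail, FormalMultilinearSeries.ofScalars_norm, NNReal.coe_one, one_pow, mul_one,
      Real.norm_eq_abs]
    exact_mod_cast abs_bernoulli_div_factorial_le_one (n + 1)
  exact_mod_cast h

theorem hasFPowerSeriesOnBall_bernoulliTail :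
    HasFPowerSeriesOnBall bernoulliTail.sum bernoulliTail 0 1 :=
  (bernoulliTail.hasFPowerSeriesOnBall (zero_lt_one.trans_le one_le_radius_bernoulliTail)).mono
    zero_lt_one one_le_radius_bernoulliTail

theorem analyticAt_bernoulliTail_sum {t : ℝ} (ht : |t| < 1) :
    AnalyticAt ℝ bernoulliTail.sum t :=
  hasFPowerSeriesOnBall_bernoulliTail.analyticAt_of_mem <| by
    rw [← ENNReal.coe_one, Metric.eball_coe]
    simpa using ht

theorem bernoulliTail_sum_eq {t : ℝ} (ht0 : t ≠ 0) (ht : |t| < 1) :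
    bernoulliTail.sum t = (Real.exp t - 1)⁻¹ - t⁻¹ := by
  have hsum : bernoulliTail.sum t = ∑' m, (bernoulli (m + 1) : ℝ) / (m + 1)! * t ^ m :=
    FormalMultilinearSeries.ofScalars_sum_eq _ t
  have hsplit : ∑' n, (bernoulli n : ℝ) / n ! * t ^ n = 1 + t * bernoulliTail.sum t := by
    rw [(summable_norm_bernoulli_div_factorial_mul_pow ht).of_norm.tsum_eq_zero_add, hsum,
      ← tsum_mul_left]
    simp only [bernoulli_zero, Rat.cast_one, Nat.factorial_zero, Nat.cast_one, div_one, pow_zero,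
      mul_one]
    congr 1
    refine tsum_congr fun m => ?_
    rw [pow_succ]
    ring
  have h := tsum_bernoulli_div_factorial_mul_pow_mul_exp_sub_one ht
  have he : Real.exp t - 1 ≠ 0 := sub_ne_zero.2 (mt (Real.exp_eq_one_iff t).1 ht0)
  rw [hsplit] at h
  field_simp
  linear_combination h

theorem iteratedDeriv_bernoulliTail_sum_zero (n : ℕ) :
    iteratedDeriv n bernoulliTail.sum 0 = bernoulli (n + 1) / (n + 1 : ℕ) := by
  rw [iteratedDeriv_eq_iteratedFDeriv,
    ← hasFPowerSeriesOnBall_bernoulliTail.factorial_smul 1 n, bernoulliTail,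
    FormalMultilinearSeries.ofScalars_apply_eq, one_pow, smul_eq_mul, mul_one, nsmul_eq_mul,
    Nat.factorial_succ]
  push_cast
  field_simp

theorem summable_pow_mul_exp_neg_mul_succ (j : ℕ) {t : ℝ} (ht : 0 < t) :
    Summable fun n : ℕ => ((n + 1 : ℕ) : ℝ) ^ j * Real.exp (-t * (n + 1 : ℕ)) :=
  (summable_nat_add_iff 1).2 (Real.summable_pow_mul_exp_neg_nat_mul j ht)

theorem norm_neg_pow_mul_exp (j m : ℕ) (s : ℝ) :
    ‖(-(m : ℝ)) ^ j * Real.exp (-s * m)‖ = (m : ℝ) ^ j * Real.exp (-s * m) := by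
  simp [abs_of_pos (Real.exp_pos _)]

theorem hasDerivAt_tsum_neg_pow_mul_exp (j : ℕ) {t : ℝ} (ht : 0 < t) :
    HasDerivAt (fun s => ∑' n : ℕ, (-((n + 1 : ℕ) : ℝ)) ^ j * Real.exp (-s * (n + 1 : ℕ)))
      (∑' n : ℕ, (-((n + 1 : ℕ) : ℝ)) ^ (j + 1) * Real.exp (-t * (n + 1 : ℕ))) t := by
  have ht2 : t ∈ Set.Ioi (t / 2) := half_lt_self ht
  refine hasDerivAt_tsum_of_isPreconnected
    (g := fun n s => (-((n + 1 : ℕ) : ℝ)) ^ j * Real.exp (-s * (n + 1 : ℕ)))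
    (g' := fun n s => (-((n + 1 : ℕ) : ℝ)) ^ (j + 1) * Real.exp (-s * (n + 1 : ℕ)))
    (summable_pow_mul_exp_neg_mul_succ (j + 1) (half_pos ht)) isOpen_Ioi isPreconnected_Ioi
    (fun n s _ => ?_) (fun n s hs => ?_) ht2 ?_ ht2
  · have h := ((hasDerivAt_neg s).mul_const ((n + 1 : ℕ) : ℝ)).exp.const_mul
      ((-((n + 1 : ℕ) : ℝ)) ^ j)
    exact h.congr_deriv (by ring)
  · rw [norm_neg_pow_mul_exp]
    gcongr
    exact le_of_lt hs
  · exact .of_norm ((summable_pow_mul_exp_neg_mul_succ j ht).congr fun n =>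
      (norm_neg_pow_mul_exp j (n + 1) t).symm)

theorem tsum_exp_neg_mul_succ {t : ℝ} (ht : 0 < t) :
    ∑' n : ℕ, Real.exp (-t * (n + 1 : ℕ)) = (Real.exp t - 1)⁻¹ := by
  have hr : Real.exp (-t) < 1 := Real.exp_lt_one_iff.2 (neg_lt_zero.2 ht)
  have he : Real.exp t - 1 ≠ 0 := sub_ne_zero.2 (mt (Real.exp_eq_one_iff t).1 ht.ne')
  simp_rw [mul_comm (-t), Real.exp_nat_mul, pow_succ, tsum_mul_right,
    tsum_geometric_of_lt_one (Real.exp_pos _).le hr, Real.exp_neg]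
  field_simp

theorem iteratedDeriv_inv_exp_sub_one (j : ℕ) {t : ℝ} (ht : 0 < t) :
    iteratedDeriv j (fun s => (Real.exp s - 1)⁻¹) t =
      ∑' n : ℕ, (-((n + 1 : ℕ) : ℝ)) ^ j * Real.exp (-t * (n + 1 : ℕ)) := by
  induction j generalizing t with
  | zero => simp only [iteratedDeriv_zero, pow_zero, one_mul, tsum_exp_neg_mul_succ ht]
  | succ j ih =>
    have heq : iteratedDeriv j (fun s => (Real.exp s - 1)⁻¹) =ᶠ[𝓝 t]
        fun s => ∑' n : ℕ, (-((n + 1 : ℕ) : ℝ)) ^ j * Real.exp (-s * (n + 1 : ℕ)) :=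
      eventually_of_mem (Ioi_mem_nhds ht) fun s hs => ih hs
    rw [iteratedDeriv_succ, heq.deriv_eq]
    exact (hasDerivAt_tsum_neg_pow_mul_exp j ht).deriv

theorem tsum_pow_mul_exp_sub_eq (j : ℕ) {t : ℝ} (ht0 : 0 < t) (ht1 : t < 1) :
    ∑' n : ℕ, ((n + 1 : ℕ) : ℝ) ^ j * Real.exp (-t * (n + 1 : ℕ)) - j ! / t ^ (j + 1) =
      (-1) ^ j * iteratedDeriv j bernoulliTail.sum t := by
  have hloc : (fun s => (Real.exp s - 1)⁻¹) =ᶠ[𝓝 t] bernoulliTail.sum + Inv.inv := by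
    filter_upwards [Ioo_mem_nhds ht0 ht1] with s hs
    rw [Pi.add_apply, bernoulliTail_sum_eq hs.1.ne' (abs_lt.2 ⟨by linarith [hs.1], hs.2⟩)]
    ring
  have hderiv := iteratedDeriv_inv_exp_sub_one j ht0
  rw [hloc.iteratedDeriv_eq, iteratedDeriv_add
      (analyticAt_bernoulliTail_sum (abs_lt.2 ⟨by linarith, ht1⟩)).contDiffAt
      (contDiffAt_inv ℝ ht0.ne'),
    iteratedDeriv_eq_iterate (f := Inv.inv), iter_deriv_inv] at hderiv
  have hsign : ∑' n : ℕ, ((n + 1 : ℕ) : ℝ) ^ j * Real.exp (-t * (n + 1 : ℕ)) =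
      (-1) ^ j * ∑' n : ℕ, (-((n + 1 : ℕ) : ℝ)) ^ j * Real.exp (-t * (n + 1 : ℕ)) := by
    rw [← tsum_mul_left]
    refine tsum_congr fun n => ?_
    rw [← mul_assoc, ← mul_pow, neg_one_mul, neg_neg]
  rw [hsign, ← hderiv, show (-1 - j : ℤ) = -((j + 1 : ℕ) : ℤ) by push_cast; ring, zpow_neg,
    zpow_natCast]
  have hsq : ((-1 : ℝ) ^ j) ^ 2 = 1 := by rw [← pow_mul, mul_comm, pow_mul]; simp
  field_simp
  linear_combination (j ! : ℝ) * hsq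

theorem tendsto_tsum_pow_mul_exp_sub (j : ℕ) :
    Tendsto (fun t : ℝ =>
        ∑' n : ℕ, ((n + 1 : ℕ) : ℝ) ^ j * Real.exp (-t * (n + 1 : ℕ)) - j ! / t ^ (j + 1))
      (𝓝[>] 0) (𝓝 ((-1) ^ j * (bernoulli (j + 1) / (j + 1 : ℕ)))) := by
  have hcont : ContinuousAt (iteratedDeriv j bernoulliTail.sum) 0 := by
    rw [iteratedDeriv_eq_iterate]
    exact ((analyticAt_bernoulliTail_sum (by simp)).iterated_deriv j).continuousAt
  rw [← iteratedDeriv_bernoulliTail_sum_zero]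
  refine ((hcont.tendsto.mono_left nhdsWithin_le_nhds).const_mul _).congr' ?_
  filter_upwards [Ioo_mem_nhdsGT zero_lt_one] with t ht
  exact (tsum_pow_mul_exp_sub_eq j ht.1 ht.2).symm

theorem ramanujan_sum_of_powers (k : ℕ) (hk : 1 ≤ k) :
    Tendsto (fun x : ℝ =>
        (∑' n : ℕ, ((n + 1 : ℕ) : ℝ) ^ (k - 1) * x ^ (n + 1)) -
          ((k - 1).factorial : ℝ) / (-Real.log x) ^ k)
      (𝓝[Set.Ioo (0 : ℝ) 1] 1)
      (𝓝 ((-1 : ℝ) ^ (k - 1) * (bernoulli k : ℝ) / k)) := by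
  obtain ⟨j, rfl⟩ := Nat.exists_eq_add_of_le' hk
  have hlog : Tendsto (fun x => -Real.log x) (𝓝[Set.Ioo (0 : ℝ) 1] 1) (𝓝[>] 0) := by
    refine tendsto_nhdsWithin_iff.2 ⟨?_, eventually_mem_nhdsWithin.mono fun x hx =>
      neg_pos.2 (Real.log_neg hx.1 hx.2)⟩
    simpa using (Real.continuousAt_log one_ne_zero).tendsto.neg.mono_left nhdsWithin_le_nhds
  have h := (tendsto_tsum_pow_mul_exp_sub j).comp hlog
  rw [Nat.add_sub_cancel, mul_div_assoc]
  refine h.congr' (eventually_mem_nhdsWithin.mono fun x hx => ?_)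
  simp only [Function.comp_apply, neg_neg, mul_comm (Real.log x), Real.exp_nat_mul,
    Real.exp_log hx.1]
end

section
/- For every integer k ≥ 1, the Abel sum of the alternating series 1^{k−1} − 2^{k−1} + 3^{k−1} − ⋯ exists: the limit as x → 1⁻ (x real, 0 < x < 1) of Σ_{n=1}^∞ (−1)^{n+1} n^{k−1} xⁿ equals (−1)^{k−1}·B_k·(1 − 2^k)/k, where B_k is the k-th Bernoulli number. -/
/-!
Put `G_m(x) = ∑_{n ≥ 0} (-1)^n (n+1)^m x^(n+1)`. Expanding `(n+2)^m` binomially and shifting the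
index gives `G_m(x) + x ∑_{j ≤ m} C(m,j) G_j(x) = x` for `|x| < 1`, so by strong induction on `m`
each `G_m` has a limit `a_m` at `1⁻`, and `2 a_m + ∑_{j < m} C(m,j) a_j = 1`. This recurrence says
that `∑ a_m t^m / m! = e^t / (e^t + 1)`. Since `1/(e^t - 1) - 2/(e^(2t) - 1) = 1/(e^t + 1)`, the
generating function `B'(t) = t e^t / (e^t - 1)` of `bernoulli'` satisfies
`B'(2t) - B'(t) = t e^t / (e^t + 1)`, whence `a_m = (2^(m+1) - 1) B'_(m+1) / (m+1)`.
-/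

open Filter Topology Finset Nat PowerSeries

theorem PowerSeries.factorial_mul_coeff_mk_mul_exp (a : ℕ → ℚ) (n : ℕ) :
    (n ! : ℚ) * coeff n (PowerSeries.mk (fun m => a m / m !) * exp ℚ)
      = ∑ j ∈ range (n + 1), (n.choose j : ℚ) * a j := by
  rw [coeff_mul, Finset.Nat.sum_antidiagonal_eq_sum_range_succ_mk, mul_sum]
  refine sum_congr rfl fun j hj => ?_
  have hjn : j ≤ n := Nat.lt_succ_iff.mp (mem_range.mp hj)
  rw [coeff_mk, coeff_exp, Algebra.algebraMap_self, RingHom.id_apply, Nat.cast_choose ℚ hjn]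
  field_simp

theorem rescale_two_bernoulli'PowerSeries_sub_mul_exp_add_one :
    (rescale (2 : ℚ) (bernoulli'PowerSeries ℚ) - bernoulli'PowerSeries ℚ) * (exp ℚ + 1)
      = X * exp ℚ := by
  have hB := bernoulli'PowerSeries_mul_exp_sub_one ℚ
  have hB2 :
      rescale (2 : ℚ) (bernoulli'PowerSeries ℚ) * (exp ℚ ^ 2 - 1) = 2 * X * exp ℚ ^ 2 := by
    have := congrArg (rescale (2 : ℚ)) hB
    rwa [map_mul, map_mul, map_sub, map_one, rescale_X, ← Nat.cast_ofNat,
      ← exp_pow_eq_rescale_exp, map_natCast, Nat.cast_ofNat] at this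
  have hexp : exp ℚ - 1 ≠ 0 := fun h => by simpa [coeff_exp] using congrArg (coeff 1) h
  refine mul_right_cancel₀ hexp ?_
  linear_combination hB2 - (exp ℚ + 1) * hB

-- With `bernoulli'` (where `B'₁ = 1/2`) the formula also covers `m = 0`, whose limit is `1/2`.
noncomputable def alternatingPowerLimit (m : ℕ) : ℚ :=
  (2 ^ (m + 1) - 1) * bernoulli' (m + 1) / (m + 1)

theorem X_mul_mk_alternatingPowerLimit :
    X * PowerSeries.mk (fun m => alternatingPowerLimit m / m !)
      = rescale (2 : ℚ) (bernoulli'PowerSeries ℚ) - bernoulli'PowerSeries ℚ := by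
  ext (_ | m)
  · simp [coeff_rescale, coeff_zero_X_mul, -coeff_zero_eq_constantCoeff]
  · rw [coeff_succ_X_mul, coeff_mk, map_sub, coeff_rescale, bernoulli'PowerSeries, coeff_mk,
      Algebra.algebraMap_self, RingHom.id_apply, alternatingPowerLimit, factorial_succ]
    push_cast
    field_simp

theorem mk_alternatingPowerLimit_mul_exp_add_one :
    PowerSeries.mk (fun m => alternatingPowerLimit m / m !) * (exp ℚ + 1) = exp ℚ :=
  X_mul_cancel <| by
    rw [← mul_assoc, X_mul_mk_alternatingPowerLimit,
      rescale_two_bernoulli'PowerSeries_sub_mul_exp_add_one]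

theorem two_mul_alternatingPowerLimit_add_sum (m : ℕ) :
    2 * alternatingPowerLimit m
      + ∑ j ∈ range m, (m.choose j : ℚ) * alternatingPowerLimit j = 1 := by
  have hcoeff := congrArg (coeff m) mk_alternatingPowerLimit_mul_exp_add_one
  rw [mul_add, mul_one, map_add, coeff_mk, coeff_exp, Algebra.algebraMap_self,
    RingHom.id_apply] at hcoeff
  have hconv := factorial_mul_coeff_mk_mul_exp alternatingPowerLimit m
  rw [sum_range_succ, choose_self, cast_one, one_mul] at hconv
  field_simp at hcoeff
  linear_combination hcoeff - hconv

noncomputable def alternatingPowerSeries (m : ℕ) (x : ℝ) : ℝ :=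
  ∑' n : ℕ, (-1) ^ n * ((n : ℝ) + 1) ^ m * x ^ (n + 1)

theorem summable_alternatingPowerSeries (m : ℕ) {x : ℝ} (hx : |x| < 1) :
    Summable fun n : ℕ => (-1) ^ n * ((n : ℝ) + 1) ^ m * x ^ (n + 1) := by
  have h := (summable_nat_add_iff 1).mpr <|
    summable_pow_mul_geometric_of_norm_lt_one m (r := -x) (by rwa [norm_neg, Real.norm_eq_abs])
  refine h.neg.congr fun n => ?_
  push_cast
  ring

theorem alternatingPowerSeries_add_mul_sum (m : ℕ) {x : ℝ} (hx : |x| < 1) :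
    alternatingPowerSeries m x
      + x * ∑ j ∈ range (m + 1), (m.choose j : ℝ) * alternatingPowerSeries j x = x := by
  have hshift : alternatingPowerSeries m x
      = x - ∑' n : ℕ, (-1) ^ n * ((n : ℝ) + 2) ^ m * x ^ (n + 2) := by
    rw [alternatingPowerSeries, (summable_alternatingPowerSeries m hx).tsum_eq_zero_add,
      sub_eq_add_neg, ← tsum_neg]
    congr 1
    · simp
    · congr 1 with n
      push_cast
      ring
  have hbinom : x * ∑ j ∈ range (m + 1), (m.choose j : ℝ) * alternatingPowerSeries j x
      = ∑' n : ℕ, (-1) ^ n * ((n : ℝ) + 2) ^ m * x ^ (n + 2) := by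
    simp only [alternatingPowerSeries, mul_sum, ← tsum_mul_left]
    rw [← Summable.tsum_finsetSum fun j _ =>
      (summable_alternatingPowerSeries j hx).mul_left _ |>.mul_left _]
    congr 1 with n
    rw [show (n : ℝ) + 2 = (n + 1) + 1 by ring, add_pow, mul_sum, sum_mul]
    refine sum_congr rfl fun j _ => ?_
    ring
  linarith

theorem tendsto_alternatingPowerSeries (m : ℕ) :
    Tendsto (alternatingPowerSeries m) (𝓝[Set.Ioo 0 1] 1) (𝓝 (alternatingPowerLimit m)) := by
  induction m using Nat.strong_induction_on with
  | _ m ih =>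
  set S := fun x => ∑ j ∈ range m, (m.choose j : ℝ) * alternatingPowerSeries j x
  set L := ∑ j ∈ range m, (m.choose j : ℝ) * alternatingPowerLimit j
  have hS : Tendsto S (𝓝[Set.Ioo 0 1] 1) (𝓝 L) :=
    tendsto_finsetSum _ fun j hj => (ih j (mem_range.mp hj)).const_mul _
  have hrec :
      (fun x => x * (1 - S x) / (1 + x)) =ᶠ[𝓝[Set.Ioo 0 1] 1] alternatingPowerSeries m := by
    filter_upwards [self_mem_nhdsWithin] with x ⟨hx0, hx1⟩
    have h := alternatingPowerSeries_add_mul_sum m (abs_lt.2 ⟨by linarith, hx1⟩)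
    rw [sum_range_succ, choose_self, cast_one, one_mul] at h
    field_simp
    linarith
  have hval : (alternatingPowerLimit m : ℝ) = 1 * (1 - L) / (1 + 1) := by
    have h : 2 * (alternatingPowerLimit m : ℝ) + L = 1 := by
      simp only [L]
      exact_mod_cast two_mul_alternatingPowerLimit_add_sum m
    linarith
  have hx : Tendsto (fun x : ℝ => x) (𝓝[Set.Ioo 0 1] 1) (𝓝 1) :=
    tendsto_nhdsWithin_of_tendsto_nhds tendsto_id
  rw [hval]
  exact ((hx.mul (tendsto_const_nhds.sub hS)).div (tendsto_const_nhds.add hx)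
    (by norm_num)).congr' hrec

theorem abel_sum_alternating_powers (k : ℕ) (hk : 1 ≤ k) :
    Tendsto (fun x : ℝ =>
        ∑' n : ℕ, (-1 : ℝ) ^ ((n + 1) + 1) * ((n + 1 : ℕ) : ℝ) ^ (k - 1) * x ^ (n + 1))
      (𝓝[Set.Ioo (0 : ℝ) 1] 1)
      (𝓝 ((-1 : ℝ) ^ (k - 1) * (bernoulli k : ℝ) * (1 - 2 ^ k) / k)) := by
  obtain ⟨m, rfl⟩ := Nat.exists_eq_add_of_le' hk
  have hseries : (fun x : ℝ =>
      ∑' n : ℕ, (-1 : ℝ) ^ ((n + 1) + 1) * ((n + 1 : ℕ) : ℝ) ^ (m + 1 - 1) * x ^ (n + 1))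
        = alternatingPowerSeries m := by
    funext x
    rw [alternatingPowerSeries, add_tsub_cancel_right]
    congr 1 with n
    push_cast
    ring
  have hlimit :
      (-1 : ℝ) ^ (m + 1 - 1) * (bernoulli (m + 1) : ℝ) * (1 - 2 ^ (m + 1)) / (m + 1 : ℕ)
        = alternatingPowerLimit m := by
    rw [alternatingPowerLimit, bernoulli'_eq_bernoulli, add_tsub_cancel_right]
    push_cast
    ring
  rw [hseries, hlimit]
  exact tendsto_alternatingPowerSeries m
end

section
/- For all integers k ≥ 1 and n ≥ 0, letting c_n(f) denote the n-th Taylor coefficient at 0 of an analytic function f, one has (k−1) · c_n( t ↦ (t/(eᵗ−1))^k · e^{(k−1)t} ) = (k−n−1) · c_n( t ↦ (t/(eᵗ−1))^{k−1} · e^{(k−1)t} ). Equivalently, in terms of generalized Bernoulli polynomials of order k, (k−1)·B_n^{(k)}(k−1) = (k−n−1)·B_n^{(k−1)}(k−1). -/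
/-!
With `B t = t / (eᵗ - 1)`, the relation `B t * (eᵗ - 1) = t` differentiates to the Riccati
equation `t B' = B - eᵗ B²`. For `g = B ^ m * e^{m t}` it turns into
`t g' = m g - m B ^ (m + 1) e^{m t}`, and since the Euler operator `t d/dt` multiplies the
`n`-th Taylor coefficient by `n`, comparing `n`-th coefficients gives the claim with `k = m + 1`.
The removable singularity of `B` is handled by writing `B = (dslope exp 0)⁻¹`.
-/

/-- The `n`-th Taylor coefficient at `0` of a function `f : ℝ → ℝ`. -/
noncomputable def taylorCoeff (n : ℕ) (f : ℝ → ℝ) : ℝ :=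
  iteratedDeriv n f 0 / n.factorial

/-- The function `t ↦ t / (eᵗ − 1)`, extended by the value `1` at `t = 0`. -/
noncomputable def bernoulliGen (t : ℝ) : ℝ :=
  if t = 0 then 1 else t / (Real.exp t - 1)

lemma AnalyticOnNhd.dslope {𝕜 E : Type*} [NontriviallyNormedField 𝕜] [NormedAddCommGroup E]
    [NormedSpace 𝕜 E] {f : 𝕜 → E} {s : Set 𝕜} {a : 𝕜} (hf : AnalyticOnNhd 𝕜 f s) (ha : a ∈ s) :
    AnalyticOnNhd 𝕜 (dslope f a) s := by
  intro b hb
  rcases eq_or_ne b a with rfl | hba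
  · obtain ⟨p, hp⟩ := hf b hb
    exact hp.has_fpower_series_dslope_fslope.analyticAt
  · refine AnalyticAt.congr ?_ (dslope_eventuallyEq_slope_of_ne f hba).symm
    simp only [slope_fun_def]
    exact ((analyticAt_id.sub analyticAt_const).inv (sub_ne_zero.2 hba)).smul
      ((hf b hb).sub analyticAt_const)

lemma dslope_exp_zero_ne_zero (t : ℝ) : dslope Real.exp 0 t ≠ 0 := by
  rcases eq_or_ne t 0 with rfl | ht
  · simp [dslope_same]
  · rw [dslope_of_ne _ ht, slope_def_field, sub_zero, Real.exp_zero]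
    exact div_ne_zero (sub_ne_zero.2 (by simpa using ht)) ht

lemma bernoulliGen_eq_inv_dslope : bernoulliGen = fun t => (dslope Real.exp 0 t)⁻¹ := by
  ext t
  rcases eq_or_ne t 0 with rfl | ht
  · simp [bernoulliGen, dslope_same]
  · rw [bernoulliGen, if_neg ht, dslope_of_ne _ ht, slope_def_field, sub_zero, Real.exp_zero,
      inv_div]

@[fun_prop]
lemma contDiff_bernoulliGen {n : WithTop ℕ∞} : ContDiff ℝ n bernoulliGen := by
  rw [bernoulliGen_eq_inv_dslope]
  exact ((analyticOnNhd_rexp.dslope (Set.mem_univ 0)).inv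
    fun t _ => dslope_exp_zero_ne_zero t).contDiff

lemma differentiable_bernoulliGen : Differentiable ℝ bernoulliGen :=
  contDiff_bernoulliGen.differentiable one_ne_zero

lemma bernoulliGen_mul_exp_sub_one (t : ℝ) : bernoulliGen t * (Real.exp t - 1) = t := by
  have h := sub_smul_dslope Real.exp 0 t
  rw [smul_eq_mul, sub_zero, Real.exp_zero] at h
  rw [← h, bernoulliGen_eq_inv_dslope, mul_left_comm, inv_mul_cancel₀ (dslope_exp_zero_ne_zero t),
    mul_one]

lemma mul_deriv_bernoulliGen (t : ℝ) :
    t * deriv bernoulliGen t = bernoulliGen t - Real.exp t * bernoulliGen t ^ 2 := by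
  have hB := (differentiable_bernoulliGen t).hasDerivAt
  have hprod := hB.mul ((Real.hasDerivAt_exp t).sub_const 1)
  have hid : HasDerivAt (fun s => bernoulliGen s * (Real.exp s - 1)) 1 t := by
    simpa only [bernoulliGen_mul_exp_sub_one] using hasDerivAt_id' t
  linear_combination bernoulliGen t * hprod.unique hid
    - deriv bernoulliGen t * bernoulliGen_mul_exp_sub_one t

lemma mul_deriv_bernoulliGen_pow_mul_exp (m : ℕ) (t : ℝ) :
    t * deriv (fun s => bernoulliGen s ^ m * Real.exp (m * s)) t =
      m * (bernoulliGen t ^ m * Real.exp (m * t)) -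
        m * (bernoulliGen t ^ (m + 1) * Real.exp (m * t)) := by
  have hB := (differentiable_bernoulliGen t).hasDerivAt
  have hg : HasDerivAt (fun s => bernoulliGen s ^ m * Real.exp (m * s)) _ t :=
    (hB.pow m).mul ((hasDerivAt_id' t).const_mul (m : ℝ)).exp
  rw [hg.deriv]
  rcases m with _ | j
  · simp
  · simp only [Nat.add_sub_cancel, Pi.pow_apply]
    push_cast
    linear_combination (j + 1) * Real.exp ((j + 1) * t) * bernoulliGen t ^ j *
        mul_deriv_bernoulliGen t
      - (j + 1) * Real.exp ((j + 1) * t) * bernoulliGen t ^ (j + 1) *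
        bernoulliGen_mul_exp_sub_one t

lemma taylorCoeff_const_mul (n : ℕ) (c : ℝ) (f : ℝ → ℝ) :
    taylorCoeff n (fun t => c * f t) = c * taylorCoeff n f := by
  simp only [taylorCoeff, iteratedDeriv_const_mul_field, mul_div_assoc]

lemma taylorCoeff_sub {n : ℕ} {f g : ℝ → ℝ} (hf : ContDiffAt ℝ n f 0) (hg : ContDiffAt ℝ n g 0) :
    taylorCoeff n (fun t => f t - g t) = taylorCoeff n f - taylorCoeff n g := by
  simp only [taylorCoeff, iteratedDeriv_fun_sub hf hg, sub_div]

lemma taylorCoeff_mul_deriv {n : ℕ} {g : ℝ → ℝ} (hg : ContDiff ℝ (n + 1) g) :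
    taylorCoeff n (fun t => t * deriv g t) = n * taylorCoeff n g := by
  have hg' : ContDiffAt ℝ n (deriv g) 0 := hg.deriv'.contDiffAt
  simp only [taylorCoeff, iteratedDeriv_fun_mul (f := fun t => t) contDiffAt_id hg',
    iteratedDeriv_fun_id_zero]
  rcases n with _ | n
  · simp
  · simp [← iteratedDeriv_succ', mul_div_assoc]

theorem genBernoulli_order_lowering (k : ℕ) (hk : 1 ≤ k) (n : ℕ) :
    ((k : ℝ) - 1) *
        taylorCoeff n (fun t => bernoulliGen t ^ k * Real.exp (((k : ℝ) - 1) * t)) =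
      ((k : ℝ) - n - 1) *
        taylorCoeff n (fun t => bernoulliGen t ^ (k - 1) * Real.exp (((k : ℝ) - 1) * t)) := by
  obtain ⟨m, rfl⟩ := Nat.exists_eq_add_of_le' hk
  push_cast
  simp only [add_sub_cancel_right]
  have euler := taylorCoeff_mul_deriv (n := n)
    (g := fun t => bernoulliGen t ^ m * Real.exp (m * t)) (by fun_prop)
  rw [funext (mul_deriv_bernoulliGen_pow_mul_exp m), taylorCoeff_sub (by fun_prop) (by fun_prop),
    taylorCoeff_const_mul, taylorCoeff_const_mul] at euler
  linear_combination -euler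
end

section
/- Let Ḡ_n denote the n-th Taylor coefficient at 0 of the function x ↦ x/(−log(1−x)) (extended by value 1 at x = 0). Then Ḡ₀ = 1 and for every n ≥ 1 one has the recursion Ḡ_n = −Σ_{k=1}^{n} Ḡ_{n−k}/(k+1). -/
/-- The function `x ↦ x / (−log (1 − x))`, extended by the value `1` at `x = 0`;
its Taylor coefficients at `0` are the signed Gregory coefficients `Ḡₙ`. -/
noncomputable def gregoryGenNeg (x : ℝ) : ℝ :=
  if x = 0 then 1 else x / (-Real.log (1 - x))

/-!
The reciprocal `-log (1 - x) / x = ∑ₖ xᵏ / (k + 1)` is analytic at `0` with value `1`, hence so is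
`gregoryGenNeg`. Since their product is `1` near `0`, the Leibniz rule gives, for `n ≥ 1`,
`0 = ∑ₖ Ḡₙ₋ₖ / (k + 1)`, whose `k = 0` term is `Ḡₙ`.
-/

open Filter Topology FormalMultilinearSeries

theorem taylorCoeff_congr {f g : ℝ → ℝ} (h : f =ᶠ[𝓝 0] g) (n : ℕ) :
    taylorCoeff n f = taylorCoeff n g := by
  rw [taylorCoeff, taylorCoeff, h.iteratedDeriv_eq]

theorem taylorCoeff_one {n : ℕ} (hn : n ≠ 0) : taylorCoeff n 1 = 0 := by
  simp [taylorCoeff, Pi.one_def, iteratedDeriv_const, hn]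

theorem taylorCoeff_mul {f g : ℝ → ℝ} {n : ℕ} (hf : ContDiffAt ℝ n f 0)
    (hg : ContDiffAt ℝ n g 0) :
    taylorCoeff n (f * g) =
      ∑ i ∈ Finset.range (n + 1), taylorCoeff i f * taylorCoeff (n - i) g := by
  rw [taylorCoeff, iteratedDeriv_mul hf hg, Finset.sum_div]
  refine Finset.sum_congr rfl fun i hi => ?_
  rw [Nat.cast_choose ℝ (Finset.mem_range_succ_iff.mp hi), taylorCoeff, taylorCoeff]
  field_simp

theorem taylorCoeff_eq_of_hasFPowerSeriesAt {f : ℝ → ℝ} {c : ℕ → ℝ}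
    (h : HasFPowerSeriesAt f (ofScalars ℝ c) 0) (n : ℕ) : taylorCoeff n f = c n := by
  have := congrArg (coeff · n) (h.analyticAt.hasFPowerSeriesAt.eq_formalMultilinearSeries h)
  simpa [taylorCoeff, coeff_ofScalars] using this

theorem hasSum_inv_gregoryGenNeg {x : ℝ} (hx : |x| < 1) :
    HasSum (fun k : ℕ => x ^ k * ((k : ℝ) + 1)⁻¹) (gregoryGenNeg x)⁻¹ := by
  rcases eq_or_ne x 0 with rfl | hx0
  · have h := hasSum_single (f := fun k : ℕ => (0 : ℝ) ^ k * ((k : ℝ) + 1)⁻¹) 0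
      fun k hk => by simp [hk]
    simpa [gregoryGenNeg] using h
  · have hG : (gregoryGenNeg x)⁻¹ = -Real.log (1 - x) / x := by
      simp only [gregoryGenNeg, if_neg hx0, inv_div]
    rw [hG]
    refine ((Real.hasSum_pow_div_log_of_abs_lt_one hx).div_const x).congr_fun fun k => ?_
    field_simp
    ring

theorem hasFPowerSeriesAt_inv_gregoryGenNeg :
    HasFPowerSeriesAt gregoryGenNeg⁻¹ (ofScalars ℝ fun k => ((k : ℝ) + 1)⁻¹) 0 := by
  rw [hasFPowerSeriesAt_iff]
  filter_upwards [Metric.ball_mem_nhds (0 : ℝ) one_pos] with x hx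
  rw [mem_ball_zero_iff, Real.norm_eq_abs] at hx
  simpa [coeff_ofScalars] using hasSum_inv_gregoryGenNeg hx

theorem analyticAt_gregoryGenNeg : AnalyticAt ℝ gregoryGenNeg 0 := by
  simpa using hasFPowerSeriesAt_inv_gregoryGenNeg.analyticAt.inv (by simp [gregoryGenNeg])

theorem inv_gregoryGenNeg_mul_self_eventuallyEq :
    gregoryGenNeg⁻¹ * gregoryGenNeg =ᶠ[𝓝 0] 1 := by
  filter_upwards [analyticAt_gregoryGenNeg.continuousAt.eventually_ne
    (by simp [gregoryGenNeg] : gregoryGenNeg 0 ≠ 0)] with x hx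
  simp [hx]

theorem signed_gregory_recursion :
    taylorCoeff 0 gregoryGenNeg = 1 ∧
    ∀ n : ℕ, 1 ≤ n →
      taylorCoeff n gregoryGenNeg =
        -∑ k ∈ Finset.Icc 1 n, taylorCoeff (n - k) gregoryGenNeg / ((k : ℝ) + 1) := by
  refine ⟨by simp [taylorCoeff, gregoryGenNeg], fun n hn => ?_⟩
  have hcauchy : (0 : ℝ) =
      ∑ k ∈ Finset.range (n + 1), ((k : ℝ) + 1)⁻¹ * taylorCoeff (n - k) gregoryGenNeg := by
    rw [← taylorCoeff_one (by omega : n ≠ 0),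
      ← taylorCoeff_congr inv_gregoryGenNeg_mul_self_eventuallyEq,
      taylorCoeff_mul hasFPowerSeriesAt_inv_gregoryGenNeg.analyticAt.contDiffAt
        analyticAt_gregoryGenNeg.contDiffAt]
    simp only [taylorCoeff_eq_of_hasFPowerSeriesAt hasFPowerSeriesAt_inv_gregoryGenNeg]
  rw [Finset.range_eq_Ico, Finset.sum_eq_sum_Ico_succ_bot (by omega), zero_add,
    Finset.Ico_add_one_right_eq_Icc] at hcauchy
  simp only [div_eq_inv_mul]
  norm_num at hcauchy
  linarith
end

section
/- For every integer k ≥ 1, let a_m denote the m-th Taylor coefficient at 0 of the function t ↦ (t/(eᵗ−1))^k · e^{(k−1)t}. Then the limit as x → 1⁻ (x real, 0 < x < 1) of (Σ_{n=0}^∞ C(n+k−1, k−1)·x^{n+1} − Σ_{m=0}^{k−1} a_m·(−log x)^{m−k}) equals (−1)^k · G_k, where C(n+k−1, k−1) is the binomial coefficient and G_k is the k-th Taylor coefficient at 0 of x ↦ x/log(1+x) (the k-th Gregory coefficient). In other words, the Ramanujan smoothed sum of the k-th figurate binomial sequence 1 + C(k,k−1) + C(k+1,k−1) + ⋯ equals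 (−1)^k G_k. -/
open Filter Topology

/-- The function `x ↦ x / log (1 + x)`, extended by the value `1` at `x = 0`;
its Taylor coefficients at `0` are the Gregory coefficients. -/
noncomputable def gregoryGen (x : ℝ) : ℝ :=
  if x = 0 then 1 else x / Real.log (1 + x)

/-!
With `x = e^{-s}` the series sums to `x / (1 - x)^k = f(s) / s^k`, where
`f(t) = (t / (eᵗ - 1))^k e^{(k-1)t}` is analytic at `0`; hence the bracket equals
`(f(s) - ∑_{m<k} a_m s^m) / s^k`, which tends to `a_k` as `s = -log x → 0`.

It remains to identify `a_k`. Since `f(-t) = (t / (eᵗ - 1))^k eᵗ`, we have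
`a_k = (-1)^k [t^k] (t / (eᵗ - 1))^k eᵗ`, and this coefficient is `G_k` by Lagrange inversion:
substituting `w = eᵗ - 1` in the Cauchy integral `∮ (t / (eᵗ - 1))^k eᵗ t^{-k-1} dt` turns it into
`∮ (w / log (1 + w)) w^{-k-1} dw`. Both integrals are computed by integrating power series termwise
along a loop around `0`; analyticity of the real functions is obtained from their holomorphic
extensions.
-/

open Set Asymptotics Nat Metric MeasureTheory
open scoped Interval

lemma AnalyticAt.tendsto_sub_taylor_div_pow {f : ℝ → ℝ} (hf : AnalyticAt ℝ f 0) (k : ℕ) :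
    Tendsto (fun s => (f s - ∑ m ∈ Finset.range k, taylorCoeff m f * s ^ m) / s ^ k)
      (𝓝[≠] 0) (𝓝 (taylorCoeff k f)) := by
  set P : ℕ → ℝ → ℝ := fun n s => ∑ m ∈ Finset.range n, taylorCoeff m f * s ^ m
  have hp : HasFPowerSeriesAt f (.ofScalars ℝ fun n => taylorCoeff n f) 0 := hf.hasFPowerSeriesAt
  have hrem : (fun s => f s - P (k + 1) s) =O[𝓝 0] fun s => s ^ (k + 1) := by
    have := hp.isBigO_sub_partialSum_pow (k + 1)
    simp only [zero_add, ← norm_pow, isBigO_norm_right] at this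
    refine this.congr_left fun s => congrArg (f s - ·) ?_
    simp [P, FormalMultilinearSeries.partialSum, mul_comm]
  have hsmall : Tendsto (fun s => (f s - P (k + 1) s) / s ^ k) (𝓝[≠] 0) (𝓝 0) := by
    have hO : (fun s => (f s - P (k + 1) s) / s ^ k) =O[𝓝[≠] 0] fun s => s := by
      refine ((hrem.mono nhdsWithin_le_nhds).mul (isBigO_refl (fun s => (s ^ k)⁻¹) _)).congr'
        (.of_forall fun s => div_eq_mul_inv _ _) ?_
      filter_upwards [self_mem_nhdsWithin] with s (hs : s ≠ 0)
      field_simp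
      ring
    exact hO.trans_tendsto (tendsto_id.mono_left nhdsWithin_le_nhds)
  simpa using (hsmall.const_add (taylorCoeff k f)).congr' <| by
    filter_upwards [self_mem_nhdsWithin] with s (hs : s ≠ 0)
    simp only [P, Finset.sum_range_succ]
    field_simp
    ring

section Contour

variable {γ γ' : ℝ → ℂ} {a b : ℝ}

lemma integral_zpow_mul_deriv_eq_zero (hγ : ∀ θ, HasDerivAt γ (γ' θ) θ) (hγ' : Continuous γ')
    (h0 : ∀ θ, γ θ ≠ 0) (hab : γ a = γ b) {n : ℤ} (hn : n ≠ -1) :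
    ∫ θ in a..b, γ θ ^ n * γ' θ = 0 := by
  have hn1 : (n : ℂ) + 1 ≠ 0 := by exact_mod_cast (by omega : n + 1 ≠ 0)
  have hprim : ∀ θ, HasDerivAt (fun θ => γ θ ^ (n + 1) / ((n : ℂ) + 1)) (γ θ ^ n * γ' θ) θ := by
    intro θ
    refine (((hasDerivAt_zpow (n + 1) (γ θ) (.inl (h0 θ))).comp θ (hγ θ)).div_const
      ((n : ℂ) + 1)).congr_deriv ?_
    rw [add_sub_cancel_right]
    push_cast
    field_simp
  have hcont : Continuous fun θ => γ θ ^ n * γ' θ :=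
    ((continuous_iff_continuousAt.mpr fun θ => (hγ θ).continuousAt).zpow₀ n
      fun θ => .inl (h0 θ)).mul hγ'
  rw [intervalIntegral.integral_eq_sub_of_hasDerivAt (fun θ _ => hprim θ)
    (hcont.intervalIntegrable _ _), hab, sub_self]

lemma HasFPowerSeriesOnBall.hasSum_coeff_mul_zpow {f : ℂ → ℂ}
    {p : FormalMultilinearSeries ℂ ℂ ℂ} {r : ENNReal} (hf : HasFPowerSeriesOnBall f p 0 r)
    {z : ℂ} (hz : z ∈ eball 0 r) (hz0 : z ≠ 0) (n : ℤ) :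
    HasSum (fun j => p.coeff j * z ^ ((j : ℤ) + n)) (z ^ n * f z) := by
  have := (hf.hasSum hz).mul_left (z ^ n)
  simp only [zero_add, FormalMultilinearSeries.apply_eq_pow_smul_coeff, smul_eq_mul] at this
  refine this.congr_fun fun j => ?_
  rw [zpow_add₀ hz0, zpow_natCast]
  ring

theorem HasFPowerSeriesOnBall.integral_zpow_mul_comp_mul_deriv {f : ℂ → ℂ}
    {p : FormalMultilinearSeries ℂ ℂ ℂ} {r : ENNReal} (hf : HasFPowerSeriesOnBall f p 0 r)
    (hγ : ∀ θ, HasDerivAt γ (γ' θ) θ) (hγ' : Continuous γ') (h0 : ∀ θ, γ θ ≠ 0)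
    (hab : γ a = γ b) {M : ℝ} (hM : ∀ θ, ‖γ θ‖ ≤ M) (hMr : ENNReal.ofReal M < r) (k : ℕ) :
    ∫ θ in a..b, γ θ ^ (-(k : ℤ) - 1) * f (γ θ) * γ' θ
      = p.coeff k * ∫ θ in a..b, (γ θ)⁻¹ * γ' θ := by
  set n : ℤ := -(k : ℤ) - 1
  have hγc : Continuous γ := continuous_iff_continuousAt.mpr fun θ => (hγ θ).continuousAt
  have hg : Continuous fun θ => γ θ ^ n * γ' θ := (hγc.zpow₀ _ fun θ => .inl (h0 θ)).mul hγ'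
  obtain ⟨C, hC⟩ := (isCompact_uIcc (a := a) (b := b)).exists_bound_of_continuousOn hg.continuousOn
  have hM0 : 0 ≤ M := (norm_nonneg _).trans (hM a)
  have hsum : HasSum (fun j => ∫ θ in a..b, p.coeff j * γ θ ^ ((j : ℤ) + n) * γ' θ)
      (∫ θ in a..b, γ θ ^ n * f (γ θ) * γ' θ) := by
    refine intervalIntegral.hasSum_integral_of_dominated_convergence
      (fun j _ => ‖p.coeff j‖ * M ^ j * C)
      (fun j => (continuous_const.mul (hγc.zpow₀ _ fun θ => .inl (h0 θ))).mul hγ'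
        |>.aestronglyMeasurable)
      (fun j => .of_forall fun θ hθ => ?_) (.of_forall fun _ _ => ?_) intervalIntegrable_const
      (.of_forall fun θ _ => ?_)
    · calc ‖p.coeff j * γ θ ^ ((j : ℤ) + n) * γ' θ‖
          = ‖p.coeff j‖ * ‖γ θ‖ ^ j * ‖γ θ ^ n * γ' θ‖ := by
            rw [zpow_add₀ (h0 θ), zpow_natCast]
            simp only [norm_mul, norm_pow]
            ring
        _ ≤ ‖p.coeff j‖ * M ^ j * C := by
            gcongr
            exacts [hM θ, hC θ (uIoc_subset_uIcc hθ)]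
    · simpa [p.norm_apply_eq_norm_coef, hM0] using
        (p.summable_norm_mul_pow (r := M.toNNReal) (hMr.trans_le hf.r_le)).mul_right C
    · have hmem : γ θ ∈ eball 0 r := by
        rw [mem_eball_zero_iff, ← ofReal_norm]
        exact (ENNReal.ofReal_le_ofReal (hM θ)).trans_lt hMr
      exact (hf.hasSum_coeff_mul_zpow hmem (h0 θ) n).mul_right (γ' θ)
  have hterm : ∀ j, ∫ θ in a..b, p.coeff j * γ θ ^ ((j : ℤ) + n) * γ' θ
      = if j = k then p.coeff k * ∫ θ in a..b, (γ θ)⁻¹ * γ' θ else 0 := by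
    intro j
    simp_rw [mul_assoc, intervalIntegral.integral_const_mul]
    split_ifs with hjk
    · simp_rw [hjk, show (k : ℤ) + n = -1 by ring, zpow_neg_one]
    · rw [integral_zpow_mul_deriv_eq_zero hγ hγ' h0 hab (by omega), mul_zero]
  rw [funext hterm] at hsum
  exact hsum.unique (hasSum_ite_eq k _)

theorem DifferentiableOn.integral_zpow_mul_comp_mul_deriv {f : ℂ → ℂ} {R : ℝ}
    (hf : DifferentiableOn ℂ f (ball 0 R))
    (hγ : ∀ θ, HasDerivAt γ (γ' θ) θ) (hγ' : Continuous γ') (h0 : ∀ θ, γ θ ≠ 0)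
    (hab : γ a = γ b) {M : ℝ} (hM : ∀ θ, ‖γ θ‖ ≤ M) (hMR : M < R) (k : ℕ) :
    ∫ θ in a..b, γ θ ^ (-(k : ℤ) - 1) * f (γ θ) * γ' θ
      = iteratedDeriv k f 0 / k ! * ∫ θ in a..b, (γ θ)⁻¹ * γ' θ := by
  obtain ⟨R', hMR', hR'R⟩ := exists_between hMR
  have hR' : 0 < R' := ((norm_nonneg _).trans (hM a)).trans_lt hMR'
  lift R' to NNReal using hR'.le
  have hp := (hf.mono (closedBall_subset_ball hR'R)).hasFPowerSeriesOnBall hR'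
  have hcoeff : (cauchyPowerSeries f 0 R').coeff k = iteratedDeriv k f 0 / k ! := by
    rw [hp.hasFPowerSeriesAt.eq_formalMultilinearSeries
      (hf.analyticAt (ball_mem_nhds 0 (hR'.trans hR'R))).hasFPowerSeriesAt]
    exact FormalMultilinearSeries.coeff_ofScalars
  rw [← hcoeff]
  refine hp.integral_zpow_mul_comp_mul_deriv hγ hγ' h0 hab hM ?_ k
  simpa using (ENNReal.ofReal_lt_ofReal_iff hR').mpr hMR'

end Contour

noncomputable def complexBernoulliGen (t : ℂ) : ℂ :=
  if t = 0 then 1 else t / (Complex.exp t - 1)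

noncomputable def complexGregoryGen (w : ℂ) : ℂ :=
  if w = 0 then 1 else w / Complex.log (1 + w)

lemma differentiableOn_ite_div {u : ℂ → ℂ} {s : Set ℂ} (hs : s ∈ 𝓝 0)
    (hu : DifferentiableOn ℂ u s) (hu' : HasDerivAt u 1 0) (hu0 : u 0 = 0)
    (hne : ∀ z ∈ s, z ≠ 0 → u z ≠ 0) :
    DifferentiableOn ℂ (fun z => if z = 0 then 1 else z / u z) s := by
  rw [← Complex.differentiableOn_compl_singleton_and_continuousAt_iff hs]
  constructor
  · refine (differentiableOn_id.div (hu.mono sdiff_subset) fun z hz => hne z hz.1 hz.2).congr ?_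
    exact fun z hz => if_neg hz.2
  · have hslope : Tendsto (fun z => u z / z) (𝓝[≠] 0) (𝓝 1) := by
      refine (hasDerivAt_iff_tendsto_slope.mp hu').congr' ?_
      filter_upwards with z
      simp [slope_def_field, hu0]
    have hinv : Tendsto (fun z => z / u z) (𝓝[≠] 0) (𝓝 1) := by
      simpa using hslope.inv₀ one_ne_zero
    rw [← continuousWithinAt_compl_self, ContinuousWithinAt, if_pos rfl]
    refine hinv.congr' ?_
    filter_upwards [self_mem_nhdsWithin] with z (hz : z ≠ 0)
    simp [hz]

lemma Complex.exp_ne_one_of_ne_zero_of_norm_lt {t : ℂ} (ht : t ≠ 0) (h : ‖t‖ < 2 * Real.pi) :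
    Complex.exp t ≠ 1 := by
  intro h1
  obtain ⟨n, rfl⟩ := Complex.exp_eq_one_iff.mp h1
  have hn : n ≠ 0 := by rintro rfl; simp at ht
  have : (1 : ℝ) ≤ |(n : ℝ)| := by exact_mod_cast Int.one_le_abs hn
  simp only [Complex.norm_mul, Complex.norm_intCast, Complex.norm_ofNat, Complex.norm_real,
    Real.norm_eq_abs, abs_of_pos Real.pi_pos, Complex.norm_I, mul_one] at h
  nlinarith [Real.pi_pos]

lemma differentiableOn_complexBernoulliGen :
    DifferentiableOn ℂ complexBernoulliGen (ball 0 (2 * Real.pi)) := by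
  refine differentiableOn_ite_div (ball_mem_nhds 0 Real.two_pi_pos)
    (Complex.differentiable_exp.sub_const 1).differentiableOn ?_ (by simp) ?_
  · simpa using (Complex.hasDerivAt_exp 0).sub_const 1
  · intro z hz hz0
    exact sub_ne_zero.mpr (Complex.exp_ne_one_of_ne_zero_of_norm_lt hz0 (by simpa using hz))

lemma differentiableOn_complexGregoryGen :
    DifferentiableOn ℂ complexGregoryGen (ball 0 1) := by
  have hslit : ∀ w ∈ ball (0 : ℂ) 1, 1 + w ∈ Complex.slitPlane := fun w hw =>
    Complex.ball_one_subset_slitPlane (by simpa [dist_eq_norm] using hw)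
  refine differentiableOn_ite_div (ball_mem_nhds 0 one_pos) ?_ ?_ (by simp) ?_
  · exact fun w hw => ((Complex.differentiableAt_log (hslit w hw)).comp w
      (differentiableAt_id.const_add 1)).differentiableWithinAt
  · simpa using ((hasDerivAt_id (0 : ℂ)).const_add 1).clog (by simp)
  · intro w hw hw0 hlog
    have := Complex.exp_log (Complex.slitPlane_ne_zero (hslit w hw))
    rw [hlog, Complex.exp_zero] at this
    exact hw0 (by linear_combination -this)

lemma complexBernoulliGen_neg (t : ℂ) :
    complexBernoulliGen (-t) = complexBernoulliGen t * Complex.exp t := by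
  rcases eq_or_ne t 0 with rfl | ht
  · simp [complexBernoulliGen]
  rw [complexBernoulliGen, complexBernoulliGen, if_neg (neg_ne_zero.mpr ht), if_neg ht,
    Complex.exp_neg]
  rcases eq_or_ne (Complex.exp t) 1 with h1 | h1
  · simp [h1]
  have h1' : Complex.exp t - 1 ≠ 0 := sub_ne_zero.mpr h1
  have h2 : (Complex.exp t)⁻¹ - 1 ≠ 0 := by
    rw [sub_ne_zero, Ne, inv_eq_one]; exact h1
  field_simp
  ring

lemma exp_sub_one_zpow_mul_complexGregoryGen {t : ℂ} (ht0 : t ≠ 0) (ht : ‖t‖ < Real.pi)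
    (k : ℕ) :
    (Complex.exp t - 1) ^ (-(k : ℤ) - 1) * complexGregoryGen (Complex.exp t - 1) * Complex.exp t
      = t ^ (-(k : ℤ) - 1) * (complexBernoulliGen t ^ k * Complex.exp t) := by
  have hexp : Complex.exp t - 1 ≠ 0 := sub_ne_zero.mpr
    (Complex.exp_ne_one_of_ne_zero_of_norm_lt ht0 (by linarith [Real.pi_pos]))
  have him := abs_lt.mp ((Complex.abs_im_le_norm t).trans_lt ht)
  rw [complexBernoulliGen, complexGregoryGen, if_neg ht0, if_neg hexp, add_sub_cancel,
    Complex.log_exp him.1 him.2.le, show -(k : ℤ) - 1 = -((k + 1 : ℕ) : ℤ) by push_cast; ring,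
    zpow_neg, zpow_neg, zpow_natCast, zpow_natCast, div_pow]
  field_simp
  ring

/-- The substitution `w = eᵗ - 1` in the Cauchy integral for the `k`-th Gregory coefficient. -/
theorem iteratedDeriv_complexGregoryGen_mul_integral {γ γ' : ℝ → ℂ} {a b : ℝ}
    (hγ : ∀ θ, HasDerivAt γ (γ' θ) θ) (hγ' : Continuous γ') (h0 : ∀ θ, γ θ ≠ 0)
    (hab : γ a = γ b) {M : ℝ} (hM : ∀ θ, ‖γ θ‖ ≤ M) (hM2 : M < 1 / 2) (k : ℕ) :
    iteratedDeriv k complexGregoryGen 0 / k !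
        * ∫ θ in a..b, (Complex.exp (γ θ) - 1)⁻¹ * (Complex.exp (γ θ) * γ' θ)
      = iteratedDeriv k (fun t => complexBernoulliGen t ^ k * Complex.exp t) 0 / k !
        * ∫ θ in a..b, (γ θ)⁻¹ * γ' θ := by
  have hγπ : ∀ θ, ‖γ θ‖ < Real.pi := fun θ => by linarith [hM θ, Real.pi_gt_three]
  have hγ1 : ∀ θ, ‖γ θ‖ ≤ 1 := fun θ => by linarith [hM θ]
  have he : ∀ θ, HasDerivAt (fun θ => Complex.exp (γ θ) - 1) (Complex.exp (γ θ) * γ' θ) θ :=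
    fun θ => ((Complex.hasDerivAt_exp _).comp θ (hγ θ)).sub_const 1
  have he' : Continuous fun θ => Complex.exp (γ θ) * γ' θ :=
    (Complex.continuous_exp.comp
      (continuous_iff_continuousAt.mpr fun θ => (hγ θ).continuousAt)).mul hγ'
  have he0 : ∀ θ, Complex.exp (γ θ) - 1 ≠ 0 := fun θ => sub_ne_zero.mpr
    (Complex.exp_ne_one_of_ne_zero_of_norm_lt (h0 θ) (by linarith [hγπ θ, Real.pi_pos]))
  have heM : ∀ θ, ‖Complex.exp (γ θ) - 1‖ ≤ 2 * M := fun θ =>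
    (Complex.norm_exp_sub_one_le (hγ1 θ)).trans (by linarith [hM θ])
  have hB : DifferentiableOn ℂ (fun t => complexBernoulliGen t ^ k * Complex.exp t) (ball 0 1) :=
    ((differentiableOn_complexBernoulliGen.mono
      (ball_subset_ball (by linarith [Real.pi_gt_three]))).pow k).mul
      Complex.differentiable_exp.differentiableOn
  rw [← differentiableOn_complexGregoryGen.integral_zpow_mul_comp_mul_deriv he he' he0
      (congrArg (fun z => Complex.exp z - 1) hab) heM (by linarith) k,
    ← hB.integral_zpow_mul_comp_mul_deriv hγ hγ' h0 hab hM (by linarith) k]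
  refine intervalIntegral.integral_congr fun θ _ => ?_
  rw [← exp_sub_one_zpow_mul_complexGregoryGen (h0 θ) (hγπ θ)]
  ring

theorem iteratedDeriv_complexBernoulliGen_pow_mul_exp (k : ℕ) :
    iteratedDeriv k (fun t => complexBernoulliGen t ^ k * Complex.exp t) 0
      = iteratedDeriv k complexGregoryGen 0 := by
  have hc0 : ∀ θ, circleMap 0 (1 / 4) θ ≠ 0 := fun θ => circleMap_ne_center (by norm_num)
  have hcper : circleMap 0 (1 / 4) 0 = circleMap 0 (1 / 4) (2 * Real.pi) := by
    simpa using (periodic_circleMap 0 (1 / 4) 0).symm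
  have hcoeff := fun n => iteratedDeriv_complexGregoryGen_mul_integral
    (hasDerivAt_circleMap 0 (1 / 4)) ((continuous_circleMap 0 _).mul continuous_const) hc0 hcper
    (fun θ => (norm_circleMap_zero _ _).trans_le (by norm_num))
    (by norm_num : (1 / 4 : ℝ) < 1 / 2) n
  -- For `n = 0` both coefficients are `1`, so the two loops have the same winding number.
  have hwind := hcoeff 0
  simp only [iteratedDeriv_zero, pow_zero, one_mul, complexGregoryGen, complexBernoulliGen,
    if_pos, Complex.exp_zero, factorial_zero, cast_one, div_one] at hwind
  have hW0 : ∫ θ in (0)..(2 * Real.pi),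
      (circleMap 0 (1 / 4) θ)⁻¹ * (circleMap 0 (1 / 4) θ * Complex.I) ≠ 0 := by
    rw [intervalIntegral.integral_congr fun θ _ => inv_mul_cancel_left₀ (hc0 θ) Complex.I]
    simp [Real.pi_ne_zero]
  have := hcoeff k
  rw [hwind] at this
  simpa [hW0, factorial_ne_zero] using this.symm

lemma AnalyticAt.re_comp_ofReal {F : ℂ → ℂ} {x : ℝ} (hF : AnalyticAt ℂ F x) :
    AnalyticAt ℝ (fun y : ℝ => (F y).re) x :=
  (Complex.reCLM.analyticAt _).comp (hF.restrictScalars.comp (Complex.ofRealCLM.analyticAt x))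

lemma iteratedDeriv_re_comp_ofReal {F : ℂ → ℂ} {U : Set ℂ} (hU : IsOpen U)
    (hF : DifferentiableOn ℂ F U) (n : ℕ) {x : ℝ} (hx : (x : ℂ) ∈ U) :
    iteratedDeriv n (fun y : ℝ => (F y).re) x = (iteratedDeriv n F x).re := by
  induction n generalizing x with
  | zero => simp
  | succ n ih =>
    have hnear : ∀ᶠ y : ℝ in 𝓝 x, (y : ℂ) ∈ U :=
      Complex.continuous_ofReal.continuousAt.preimage_mem_nhds (hU.mem_nhds hx)
    have hD : DifferentiableAt ℂ (iteratedDeriv n F) x := by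
      rw [iteratedDeriv_eq_iterate]
      exact ((hF.analyticOnNhd hU).iterated_deriv n x hx).differentiableAt
    rw [iteratedDeriv_succ, iteratedDeriv_succ,
      (Filter.eventuallyEq_of_mem hnear fun y hy => ih hy).deriv_eq]
    exact hD.hasDerivAt.real_of_complex.deriv

lemma ofReal_bernoulliGen (x : ℝ) : (bernoulliGen x : ℂ) = complexBernoulliGen x := by
  rcases eq_or_ne x 0 with rfl | hx
  · simp [bernoulliGen, complexBernoulliGen]
  · simp [bernoulliGen, complexBernoulliGen, hx]

lemma ofReal_gregoryGen {x : ℝ} (hx : -1 < x) : (gregoryGen x : ℂ) = complexGregoryGen x := by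
  rcases eq_or_ne x 0 with rfl | hx0
  · simp [gregoryGen, complexGregoryGen]
  · have h1x : 0 ≤ 1 + x := by linarith
    simp [gregoryGen, complexGregoryGen, hx0, Complex.ofReal_log h1x]

lemma bernoulliGen_pow_mul_exp_eq_re (k : ℕ) (t : ℝ) :
    bernoulliGen t ^ k * Real.exp (((k : ℝ) - 1) * t)
      = (complexBernoulliGen (-t) ^ k * Complex.exp (-t)).re := by
  rw [complexBernoulliGen_neg, ← ofReal_bernoulliGen, mul_pow, mul_assoc, ← Complex.exp_nat_mul,
    ← Complex.exp_add, show (k : ℂ) * t + -t = ((((k : ℝ) - 1) * t : ℝ) : ℂ) by push_cast; ring,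
    ← Complex.ofReal_exp, ← Complex.ofReal_pow, ← Complex.ofReal_mul, Complex.ofReal_re]

lemma differentiableOn_complexBernoulliGen_neg_pow_mul_exp_neg (k : ℕ) :
    DifferentiableOn ℂ (fun t => complexBernoulliGen (-t) ^ k * Complex.exp (-t))
      (ball 0 (2 * Real.pi)) := by
  have hneg : MapsTo (fun t : ℂ => -t) (ball 0 (2 * Real.pi)) (ball 0 (2 * Real.pi)) :=
    fun t ht => by simpa using ht
  exact ((differentiableOn_complexBernoulliGen.comp (differentiableOn_neg _) hneg).pow k).mul
    (Complex.differentiable_exp.comp differentiable_neg).differentiableOn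

theorem analyticAt_bernoulliGen_pow_mul_exp (k : ℕ) :
    AnalyticAt ℝ (fun t => bernoulliGen t ^ k * Real.exp (((k : ℝ) - 1) * t)) 0 := by
  simp_rw [bernoulliGen_pow_mul_exp_eq_re]
  exact ((differentiableOn_complexBernoulliGen_neg_pow_mul_exp_neg k).analyticAt
    (ball_mem_nhds 0 Real.two_pi_pos)).re_comp_ofReal

theorem taylorCoeff_bernoulliGen_pow_mul_exp (k : ℕ) :
    taylorCoeff k (fun t => bernoulliGen t ^ k * Real.exp (((k : ℝ) - 1) * t))
      = (-1) ^ k * taylorCoeff k gregoryGen := by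
  have hG : gregoryGen =ᶠ[𝓝 0] fun x : ℝ => (complexGregoryGen x).re := by
    filter_upwards [Ioi_mem_nhds (by norm_num : (-1 : ℝ) < 0)] with x hx
    rw [← ofReal_gregoryGen hx, Complex.ofReal_re]
  simp_rw [taylorCoeff, bernoulliGen_pow_mul_exp_eq_re]
  rw [hG.iteratedDeriv_eq,
    iteratedDeriv_re_comp_ofReal isOpen_ball
      (differentiableOn_complexBernoulliGen_neg_pow_mul_exp_neg k) k (x := 0)
      (by simpa using Real.two_pi_pos),
    iteratedDeriv_re_comp_ofReal isOpen_ball differentiableOn_complexGregoryGen k (x := 0)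
      (by simp)]
  have hneg := iteratedDeriv_comp_neg k (fun t => complexBernoulliGen t ^ k * Complex.exp t) 0
  simp only [neg_zero] at hneg
  rw [Complex.ofReal_zero, hneg, iteratedDeriv_complexBernoulliGen_pow_mul_exp, smul_eq_mul,
    show (-1 : ℂ) ^ k = ((-1 : ℝ) ^ k : ℝ) by push_cast; rfl, Complex.re_ofReal_mul]
  ring

lemma tsum_choose_mul_pow_succ {x : ℝ} (hx : |x| < 1) (j : ℕ) :
    ∑' n : ℕ, ((n + j).choose j : ℝ) * x ^ (n + 1) = x / (1 - x) ^ (j + 1) := by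
  simp_rw [pow_succ, ← mul_assoc, tsum_mul_right,
    tsum_choose_mul_geometric_of_norm_lt_one j (by rwa [Real.norm_eq_abs])]
  ring

lemma exp_neg_div_one_sub_exp_neg_pow {s : ℝ} (hs : s ≠ 0) (k : ℕ) :
    Real.exp (-s) / (1 - Real.exp (-s)) ^ k
      = bernoulliGen s ^ k * Real.exp (((k : ℝ) - 1) * s) / s ^ k := by
  have hE : Real.exp s - 1 ≠ 0 := sub_ne_zero.mpr (by simpa using hs)
  have hE' : 1 - Real.exp (-s) = (Real.exp s - 1) * Real.exp (-s) := by
    rw [sub_mul, ← Real.exp_add]; simp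
  rw [bernoulliGen, if_neg hs, hE', show ((k : ℝ) - 1) * s = k * s + -s by ring,
    Real.exp_add, Real.exp_nat_mul, Real.exp_neg]
  rw [div_pow, mul_pow, inv_pow]
  field_simp

lemma tendsto_neg_log_nhdsWithin_Ioo_one :
    Tendsto (fun x => -Real.log x) (𝓝[Ioo 0 1] 1) (𝓝[≠] 0) := by
  refine tendsto_nhdsWithin_of_tendsto_nhds_of_eventually_within _ ?_ ?_
  · simpa using (Real.continuousAt_log one_ne_zero).tendsto.neg.mono_left nhdsWithin_le_nhds
  · filter_upwards [self_mem_nhdsWithin] with x hx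
    exact neg_ne_zero.mpr (Real.log_neg hx.1 hx.2).ne

theorem ramanujan_smoothed_sum_figurate (k : ℕ) (hk : 1 ≤ k) :
    Tendsto (fun x : ℝ =>
        (∑' n : ℕ, ((n + k - 1).choose (k - 1) : ℝ) * x ^ (n + 1)) -
          ∑ m ∈ Finset.range k,
            taylorCoeff m (fun t => bernoulliGen t ^ k * Real.exp (((k : ℝ) - 1) * t)) *
              (-Real.log x) ^ ((m : ℤ) - (k : ℤ)))
      (𝓝[Set.Ioo (0 : ℝ) 1] 1)
      (𝓝 ((-1 : ℝ) ^ k * taylorCoeff k gregoryGen)) := by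
  obtain ⟨j, rfl⟩ := Nat.exists_eq_add_of_le' hk
  set f := fun t => bernoulliGen t ^ (j + 1) * Real.exp ((((j + 1 : ℕ) : ℝ) - 1) * t)
  have hlim := ((analyticAt_bernoulliGen_pow_mul_exp (j + 1)).tendsto_sub_taylor_div_pow
    (j + 1)).comp tendsto_neg_log_nhdsWithin_Ioo_one
  rw [taylorCoeff_bernoulliGen_pow_mul_exp] at hlim
  refine hlim.congr' ?_
  filter_upwards [self_mem_nhdsWithin] with x ⟨hx0, hx1⟩
  have hs : -Real.log x ≠ 0 := neg_ne_zero.mpr (Real.log_neg hx0 hx1).ne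
  have hclosed : x / (1 - x) ^ (j + 1) = f (-Real.log x) / (-Real.log x) ^ (j + 1) := by
    have := exp_neg_div_one_sub_exp_neg_pow hs (j + 1)
    rwa [neg_neg, Real.exp_log hx0] at this
  simp only [Nat.add_succ_sub_one, Nat.add_sub_cancel, Function.comp_apply]
  rw [tsum_choose_mul_pow_succ (by rwa [abs_of_pos hx0]) j, hclosed, sub_div, Finset.sum_div]
  congr 1
  refine Finset.sum_congr rfl fun m _ => ?_
  rw [zpow_sub₀ hs, zpow_natCast, zpow_natCast, mul_div_assoc]
end

section
/- For real x with 0 < x < 1, the series Σ_{n=1}^∞ (n(n+1)/2)·xⁿ of triangular numbers converges, and the limit as x → 1⁻ of (Σ_{n=1}^∞ (n(n+1)/2)·xⁿ − 1/(−log x)³ − 1/(2(−log x)²)) equals −1/24; that is, the Ramanujan smoothed sum of the triangular numbers 1 + 3 + 6 + 10 + 15 + ⋯ is −1/24. -/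
/-!
For `0 < x < 1` the series sums to `x / (1 - x) ^ 3`. Substituting `x = exp (-t)`, the expression
becomes `(N t / t ^ 6) / (2 * ((1 - exp (-t)) / t) ^ 3)` with
`N t = 2 t³ exp (-t) - (2 + t) (1 - exp (-t))³` (`triangularNumerator`), and
`(1 - exp (-t)) / t → 1`. Expanding `(1 - exp (-t))³ = 1 - 3 exp (-t) + 3 exp (-2t) - exp (-3t)`
makes `N` linear in the exponentials, so the order-6 Taylor expansion of `exp` at `-t`, `-2t`,
`-3t` gives `N t = -t⁶/12 + O(t⁷)`, whence the limit `(-1/12) / 2 = -1/24`.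
-/

open Filter Topology Asymptotics Finset
open scoped Nat

lemma hasSum_triangular_mul_pow {𝕜 : Type*} [NormedField 𝕜] [CompleteSpace 𝕜] [CharZero 𝕜]
    {x : 𝕜} (hx : ‖x‖ < 1) :
    HasSum (fun n : ℕ => ((((n + 1) * (n + 2) : ℕ) : 𝕜) / 2) * x ^ (n + 1)) (x / (1 - x) ^ 3) := by
  have h := (hasSum_choose_mul_geometric_of_norm_lt_one 2 hx).mul_left x
  rw [← div_eq_mul_one_div] at h
  refine h.congr_fun fun n => ?_
  rw [Nat.cast_choose_two]
  push_cast
  ring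

section Asymptotics

variable {𝕜 : Type*} [NormedField 𝕜]

lemma Filter.Tendsto.mul_isBigO {α E : Type*} [SeminormedAddCommGroup E] {l : Filter α}
    {f g : α → 𝕜} {h : α → E} {c : 𝕜} (hf : Tendsto f l (𝓝 c)) (hg : g =O[l] h) :
    (fun x => f x * g x) =O[l] h := by
  have hfg := (hf.isBigO_one ℝ).mul hg.norm_right
  simp only [one_mul] at hfg
  exact hfg.of_norm_right

lemma Asymptotics.IsBigO.comp_const_mul_of_pow {E : Type*} [NormedAddCommGroup E] {f : 𝕜 → E}
    {n : ℕ} (hf : f =O[𝓝 0] (· ^ n)) (k : 𝕜) : (fun t => f (k * t)) =O[𝓝 0] (· ^ n) := by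
  have hk : Tendsto (fun t : 𝕜 => k * t) (𝓝 0) (𝓝 0) := by
    simpa using (continuous_const_mul k).tendsto 0
  refine (hf.comp_tendsto hk).trans ?_
  simpa [Function.comp_def, mul_pow] using isBigO_const_mul_self (k ^ n) (fun t : 𝕜 => t ^ n) _

lemma tendsto_div_pow_of_isBigO_pow_succ {f : 𝕜 → 𝕜} {n : ℕ} (hf : f =O[𝓝 0] (· ^ (n + 1))) :
    Tendsto (fun t => f t / t ^ n) (𝓝[≠] 0) (𝓝 0) := by
  have hO : (fun t => f t / t ^ n) =O[𝓝[≠] 0] id := by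
    refine ((hf.mono nhdsWithin_le_nhds).mul (isBigO_refl (fun t : 𝕜 => (t ^ n)⁻¹) _)).congr'
      (.of_forall fun t => (div_eq_mul_inv _ _).symm) ?_
    filter_upwards [self_mem_nhdsWithin] with t (ht : t ≠ 0)
    rw [id, pow_succ, mul_comm, inv_mul_cancel_left₀ (pow_ne_zero n ht)]
  exact hO.trans_tendsto (tendsto_id.mono_left nhdsWithin_le_nhds)

end Asymptotics

noncomputable def triangularNumerator (t : ℝ) : ℝ :=
  2 * t ^ 3 * Real.exp (-t) - (2 + t) * (1 - Real.exp (-t)) ^ 3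

lemma triangularNumerator_add_isBigO :
    (fun t => triangularNumerator t + t ^ 6 / 12) =O[𝓝 0] (· ^ 7) := by
  set R : ℝ → ℝ := fun s => Real.exp s - ∑ i ∈ range 7, s ^ i / i ! with hR_def
  have hR : ∀ k : ℝ, (fun t => R (k * t)) =O[𝓝 0] (· ^ 7) :=
    (Real.exp_sub_sum_range_isBigO_pow 7).comp_const_mul_of_pow
  have hN : ∀ t, triangularNumerator t + t ^ 6 / 12 =
      (2 * t ^ 3 + 3 * (2 + t)) * R (-1 * t) - 3 * (2 + t) * R (-2 * t) + (2 + t) * R (-3 * t)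
        + (5 / 6 - t / 60 + t ^ 2 / 360) * t ^ 7 := by
    intro t
    have h2 : Real.exp (-2 * t) = Real.exp (-t) ^ 2 := by rw [← Real.exp_nat_mul]; ring_nf
    have h3 : Real.exp (-3 * t) = Real.exp (-t) ^ 3 := by rw [← Real.exp_nat_mul]; ring_nf
    simp only [triangularNumerator, hR_def, sum_range_succ, sum_range_zero, Nat.factorial,
      neg_one_mul, h2, h3]
    push_cast
    ring
  have hmul : ∀ {c g : ℝ → ℝ}, Continuous c → g =O[𝓝 0] (· ^ 7) →
      (fun t => c t * g t) =O[𝓝 0] (· ^ 7) :=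
    fun hc hg => (hc.tendsto 0).mul_isBigO hg
  simp_rw [hN]
  exact (((hmul (by fun_prop) (hR _)).sub (hmul (by fun_prop) (hR _))).add
    (hmul (by fun_prop) (hR _))).add (hmul (by fun_prop) (isBigO_refl _ _))

lemma tendsto_one_sub_exp_neg_div :
    Tendsto (fun t : ℝ => (1 - Real.exp (-t)) / t) (𝓝[≠] 0) (𝓝 1) := by
  have h := ((Real.hasDerivAt_exp _).comp 0 (hasDerivAt_neg (0 : ℝ))).tendsto_slope_zero.neg
  refine (h.congr fun t => ?_).trans (by simp)
  simp [div_eq_inv_mul, ← mul_neg]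

lemma tendsto_exp_neg_div_one_sub_exp_neg_pow_three_sub :
    Tendsto (fun t : ℝ => Real.exp (-t) / (1 - Real.exp (-t)) ^ 3 - 1 / t ^ 3 - 1 / (2 * t ^ 2))
      (𝓝[≠] 0) (𝓝 (-1 / 24)) := by
  have hN := (tendsto_div_pow_of_isBigO_pow_succ triangularNumerator_add_isBigO).sub_const (1 / 12)
  have hD := (tendsto_one_sub_exp_neg_div.pow 3).const_mul 2
  have h := hN.div hD (by norm_num)
  rw [show ((0 : ℝ) - 1 / 12) / (2 * 1 ^ 3) = -1 / 24 by norm_num] at h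
  refine h.congr' ?_
  filter_upwards [self_mem_nhdsWithin] with t (ht : t ≠ 0)
  have hE : 1 - Real.exp (-t) ≠ 0 := by
    rw [sub_ne_zero, ne_comm, Ne, Real.exp_eq_one_iff, neg_eq_zero]
    exact ht
  simp only [Pi.div_apply, triangularNumerator]
  field_simp
  ring

lemma tendsto_neg_log_nhdsNE_one : Tendsto (fun x => -Real.log x) (𝓝[≠] 1) (𝓝[≠] 0) := by
  refine tendsto_nhdsWithin_iff.2 ⟨?_, ?_⟩
  · simpa using ((Real.continuousAt_log one_ne_zero).tendsto.neg).mono_left nhdsWithin_le_nhds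
  · filter_upwards [self_mem_nhdsWithin, nhdsWithin_le_nhds (Ioi_mem_nhds one_pos)] with x hx1 hx0
    exact neg_ne_zero.2 (Real.log_ne_zero_of_pos_of_ne_one hx0 hx1)

theorem ramanujan_sum_of_triangular_numbers :
    (∀ x : ℝ, 0 < x → x < 1 →
      Summable (fun n : ℕ => ((((n + 1) * (n + 2) : ℕ) : ℝ) / 2) * x ^ (n + 1))) ∧
    Tendsto (fun x : ℝ =>
        (∑' n : ℕ, ((((n + 1) * (n + 2) : ℕ) : ℝ) / 2) * x ^ (n + 1)) -
          1 / (-Real.log x) ^ 3 - 1 / (2 * (-Real.log x) ^ 2))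
      (𝓝[Set.Ioo (0 : ℝ) 1] 1) (𝓝 (-1 / 24)) := by
  have hSum : ∀ x : ℝ, 0 < x → x < 1 → HasSum
      (fun n : ℕ => ((((n + 1) * (n + 2) : ℕ) : ℝ) / 2) * x ^ (n + 1)) (x / (1 - x) ^ 3) :=
    fun x hx0 hx1 => hasSum_triangular_mul_pow (abs_lt.2 ⟨by linarith, hx1⟩)
  refine ⟨fun x hx0 hx1 => (hSum x hx0 hx1).summable, ?_⟩
  have hlog : Tendsto (fun x => -Real.log x) (𝓝[Set.Ioo (0 : ℝ) 1] 1) (𝓝[≠] 0) :=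
    tendsto_neg_log_nhdsNE_one.mono_left (nhdsWithin_mono _ fun x hx => hx.2.ne)
  refine (tendsto_exp_neg_div_one_sub_exp_neg_pow_three_sub.comp hlog).congr' ?_
  filter_upwards [self_mem_nhdsWithin] with x hx
  simp only [Function.comp_apply, neg_neg, Real.exp_log hx.1, (hSum x hx.1 hx.2).tsum_eq]
end
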